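/- arXiv:2210.12676 — 9 statements merged into one kernel-verified Lean document; each statement's English description precedes it below -/
import Mathlib

section
/- Let (M, M̃) be a Feller topological monoid. Then M̃ separates points: for any two distinct elements x, y ∈ M there exists χ ∈ M̃ such that χ(x) ≠ χ(y). -/
open Filter Topology MeasureTheory

/-- A determining class of characters making `(M, S)` a Feller topological monoid:
`S` is a nonempty countable set of Borel-measurable characters `χ : M → [0,1]`,
closed under pointwise multiplication, such that for every sequence in `M`:
(i) all characters tend to `0` along the sequence iff the sequence tends to the
point at infinity (the cocompact filter), and (ii) if all characters converge along
the sequence and the limit function is not identically zero, then the sequence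
converges in `M` and the limits are the values of the characters at the limit point. -/
structure FellerClass (M : Type*) [TopologicalSpace M] [CommMonoid M]
    [MeasurableSpace M] (S : Set (M → ℝ)) : Prop where
  nonempty : S.Nonempty
  countable : S.Countable
  mem_Icc : ∀ χ ∈ S, ∀ x : M, χ x ∈ Set.Icc (0 : ℝ) 1
  map_one : ∀ χ ∈ S, χ 1 = 1
  map_mul : ∀ χ ∈ S, ∀ x y : M, χ (x * y) = χ x * χ y
  measurable : ∀ χ ∈ S, Measurable χ
  mul_mem : ∀ χ₁ ∈ S, ∀ χ₂ ∈ S, (fun x => χ₁ x * χ₂ x) ∈ S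
  tendsto_zero_iff : ∀ x : ℕ → M,
    (∀ χ ∈ S, Tendsto (fun n => χ (x n)) atTop (𝓝 0)) ↔
      Tendsto x atTop (cocompact M)
  limit_exists : ∀ (x : ℕ → M) (ψ : (M → ℝ) → ℝ),
    (∀ χ ∈ S, Tendsto (fun n => χ (x n)) atTop (𝓝 (ψ χ))) →
    (∃ χ ∈ S, ψ χ ≠ 0) →
    ∃ a : M, Tendsto x atTop (𝓝 a) ∧ ∀ χ ∈ S, ψ χ = χ a

/-- In a Feller topological monoid, the determining class `S`
separates points: for distinct `x y : M` there is `χ ∈ S` with `χ x ≠ χ y`. -/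
theorem FellerClass.separates {M : Type*} [TopologicalSpace M] [CommMonoid M]
    [ContinuousMul M] [LocallyCompactSpace M] [SecondCountableTopology M] [T2Space M]
    [MeasurableSpace M] [BorelSpace M]
    {S : Set (M → ℝ)} (hS : FellerClass M S) {x y : M} (hxy : x ≠ y) :
    ∃ χ ∈ S, χ x ≠ χ y := by
  by_contra h
  push_neg at h
  -- First: some character is nonzero at x
  have hnz : ∃ χ ∈ S, χ x ≠ 0 := by
    by_contra h0
    push_neg at h0
    have hzero : ∀ χ ∈ S, Tendsto (fun _ : ℕ => χ x) atTop (𝓝 0) := by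
      intro χ hχ
      rw [h0 χ hχ]
      exact tendsto_const_nhds
    have hco : Tendsto (fun _ : ℕ => x) atTop (cocompact M) :=
      (hS.tendsto_zero_iff (fun _ => x)).mp hzero
    have := (hasBasis_cocompact.tendsto_right_iff.mp hco) {x} isCompact_singleton
    rcases this.exists with ⟨n, hn⟩
    exact hn rfl
  -- alternating sequence
  set seq : ℕ → M := fun n => if Even n then x else y with hseq
  have hconst : ∀ χ ∈ S, ∀ n, χ (seq n) = χ x := by
    intro χ hχ n
    by_cases hn : Even n <;> simp [hseq, hn, h χ hχ]
  have hlim : ∀ χ ∈ S, Tendsto (fun n => χ (seq n)) atTop (𝓝 ((fun χ' : M → ℝ => χ' x) χ)) := by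
    intro χ hχ
    simp only
    have : (fun n => χ (seq n)) = fun _ => χ x := funext (hconst χ hχ)
    rw [this]
    exact tendsto_const_nhds
  obtain ⟨a, ha, -⟩ := hS.limit_exists seq (fun χ => χ x) hlim hnz
  have h2 : Tendsto (fun n : ℕ => 2 * n) atTop atTop :=
    (strictMono_nat_of_lt_succ (fun n => by omega)).tendsto_atTop
  have h2' : Tendsto (fun n : ℕ => 2 * n + 1) atTop atTop :=
    (strictMono_nat_of_lt_succ (fun n => by omega)).tendsto_atTop
  have hxa : Tendsto (fun _ : ℕ => x) atTop (𝓝 a) := by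
    have := ha.comp h2
    have heq : (seq ∘ fun n : ℕ => 2 * n) = fun _ => x := by
      funext n; simp [hseq, Function.comp, even_two_mul]
    rwa [heq] at this
  have hya : Tendsto (fun _ : ℕ => y) atTop (𝓝 a) := by
    have := ha.comp h2'
    have heq : (seq ∘ fun n : ℕ => 2 * n + 1) = fun _ => y := by
      funext n
      simp [hseq, Function.comp, Nat.even_add_one, even_two_mul]
    rwa [heq] at this
  have hx : x = a := tendsto_nhds_unique tendsto_const_nhds hxa
  have hy : y = a := tendsto_nhds_unique tendsto_const_nhds hya
  exact hxy (hx.trans hy.symm)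
end

section
/- (Convergence criterion) Let (M, M̃) be a Feller topological monoid. If (x_n)_{n≥1} ⊆ M is a sequence such that the infinite product ∏_{n≥1} χ(x_n) is strictly greater than 0 for some character χ ∈ M̃, then there exists an element of M, denoted ⊕_{i=1}^∞ x_i, such that the partial sums ⊕_{i=1}^n x_i converge to ⊕_{i=1}^∞ x_i as n → ∞; moreover, for any reordering (x̃_n) of the sequence (x_n), the partial sums ⊕_{i=1}^n x̃_i converge to the same limit, so that ⊕_{n∈ℕ} x_n is well defined independently of the order of the ⊕-addends. -/
open Filter Topology MeasureTheory

private lemma prod_mem_Icc' {f : ℕ → ℝ} (hf : ∀ i, f i ∈ Set.Icc (0:ℝ) 1)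
    (G : Finset ℕ) : ∏ i ∈ G, f i ∈ Set.Icc (0:ℝ) 1 :=
  ⟨Finset.prod_nonneg fun i _ => (hf i).1,
   Finset.prod_le_one (fun i _ => (hf i).1) (fun i _ => (hf i).2)⟩

private lemma prod_anti' {f : ℕ → ℝ} (hf : ∀ i, f i ∈ Set.Icc (0:ℝ) 1)
    {G G' : Finset ℕ} (h : G ⊆ G') : ∏ i ∈ G', f i ≤ ∏ i ∈ G, f i := by
  rw [← Finset.prod_sdiff h]
  calc (∏ i ∈ G' \ G, f i) * ∏ i ∈ G, f i
      ≤ 1 * ∏ i ∈ G, f i :=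
        mul_le_mul_of_nonneg_right (prod_mem_Icc' hf _).2 (prod_mem_Icc' hf _).1
    _ = ∏ i ∈ G, f i := one_mul _

private lemma tendsto_prod_finsets' {f : ℕ → ℝ} (hf : ∀ i, f i ∈ Set.Icc (0:ℝ) 1)
    {F : ℕ → Finset ℕ} (hmono : Monotone F) (hex : ∀ m, ∃ n, m ∈ F n) :
    Tendsto (fun n => ∏ i ∈ F n, f i) atTop (𝓝 (⨅ G : Finset ℕ, ∏ i ∈ G, f i)) := by
  have hbdd : BddBelow (Set.range fun n => ∏ i ∈ F n, f i) :=
    ⟨0, by rintro _ ⟨n, rfl⟩; exact (prod_mem_Icc' hf _).1⟩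
  have hbdd' : BddBelow (Set.range fun G : Finset ℕ => ∏ i ∈ G, f i) :=
    ⟨0, by rintro _ ⟨G, rfl⟩; exact (prod_mem_Icc' hf _).1⟩
  have hanti : Antitone fun n => ∏ i ∈ F n, f i :=
    fun n m h => prod_anti' hf (hmono h)
  have heq : (⨅ n, ∏ i ∈ F n, f i) = ⨅ G : Finset ℕ, ∏ i ∈ G, f i := by
    apply le_antisymm
    · apply le_ciInf; intro G
      obtain ⟨n, hn⟩ : ∃ n, G ⊆ F n := by
        induction G using Finset.cons_induction with
        | empty => exact ⟨0, Finset.empty_subset _⟩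
        | cons a G ha ih =>
          obtain ⟨n₁, hn₁⟩ := ih
          obtain ⟨n₂, hn₂⟩ := hex a
          refine ⟨max n₁ n₂, fun b hb => ?_⟩
          rcases Finset.mem_cons.mp hb with rfl | hb
          · exact hmono (le_max_right _ _) hn₂
          · exact hmono (le_max_left _ _) (hn₁ hb)
      exact le_trans (ciInf_le hbdd n) (prod_anti' hf hn)
    · exact le_ciInf fun n => ciInf_le hbdd' (F n)
  rw [← heq]
  exact tendsto_atTop_ciInf hanti hbdd

private lemma char_prod' {M : Type*} [CommMonoid M] {χ : M → ℝ}
    (h1 : χ 1 = 1) (hm : ∀ x y : M, χ (x * y) = χ x * χ y)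
    (g : ℕ → M) (G : Finset ℕ) : χ (∏ i ∈ G, g i) = ∏ i ∈ G, χ (g i) := by
  induction G using Finset.cons_induction with
  | empty => simpa using h1
  | cons a G ha ih => rw [Finset.prod_cons, hm, ih, Finset.prod_cons]

private lemma FellerClass.sep' {M : Type*} [TopologicalSpace M] [CommMonoid M]
    [T2Space M] [MeasurableSpace M]
    {S : Set (M → ℝ)} (hS : FellerClass M S) {a a' : M}
    (h : ∀ χ ∈ S, χ a = χ a') : a = a' := by
  have hne : ∃ χ ∈ S, χ a ≠ 0 := by
    by_contra hc
    push_neg at hc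
    have hT : Tendsto (fun _ : ℕ => a) atTop (cocompact M) := by
      rw [← hS.tendsto_zero_iff]
      intro χ hχ
      simp [hc χ hχ, tendsto_const_nhds]
    have h2 : ({a}ᶜ : Set M) ∈ cocompact M :=
      mem_cocompact.mpr ⟨{a}, isCompact_singleton, le_refl _⟩
    have := hT h2
    simp at this
  set y : ℕ → M := fun n => if Even n then a else a' with hy
  have hχy : ∀ χ ∈ S, ∀ n, χ (y n) = χ a := by
    intro χ hχ n
    by_cases hn : Even n <;> simp [hy, hn, h χ hχ]
  obtain ⟨b, hb, -⟩ := hS.limit_exists y (fun χ => χ a)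
    (fun χ hχ => by
      simp only [hχy χ hχ]
      exact tendsto_const_nhds) hne
  have h2n : Tendsto (fun n : ℕ => (2 * n : ℕ)) atTop atTop :=
    StrictMono.tendsto_atTop (fun i j hij => by omega)
  have h2n1 : Tendsto (fun n : ℕ => (2 * n + 1 : ℕ)) atTop atTop :=
    StrictMono.tendsto_atTop (fun i j hij => by omega)
  have hae : Tendsto (fun n : ℕ => y (2 * n)) atTop (𝓝 b) := hb.comp h2n
  have hao : Tendsto (fun n : ℕ => y (2 * n + 1)) atTop (𝓝 b) := hb.comp h2n1
  have hya : ∀ n : ℕ, y (2 * n) = a := fun n => by simp [hy, even_two_mul n]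
  have hya' : ∀ n : ℕ, y (2 * n + 1) = a' := fun n => by
    have : ¬ Even (2 * n + 1) := by simp [Nat.even_add_one, even_two_mul n]
    simp [hy, this]
  simp only [hya] at hae
  simp only [hya'] at hao
  exact (tendsto_nhds_unique tendsto_const_nhds hae).trans
    (tendsto_nhds_unique hao tendsto_const_nhds)


/-- Convergence criterion: if for some character `χ ∈ S` the
infinite product `∏_{n≥1} χ(x_n)` is strictly positive (i.e. the monotone
sequence of partial products converges to some `c > 0`), then the partial sums
`⊕_{i=1}^n x_i` converge to an element `a ∈ M`, and for every reordering of the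
sequence (i.e. every permutation `σ` of `ℕ`) the reordered partial sums
converge to the same element `a`. -/
theorem FellerClass.convergence_criterion {M : Type*} [TopologicalSpace M] [CommMonoid M]
    [ContinuousMul M] [LocallyCompactSpace M] [SecondCountableTopology M] [T2Space M]
    [MeasurableSpace M] [BorelSpace M]
    {S : Set (M → ℝ)} (hS : FellerClass M S) (x : ℕ → M)
    (h : ∃ χ ∈ S, ∃ c : ℝ, 0 < c ∧
      Tendsto (fun m => ∏ i ∈ Finset.range m, χ (x i)) atTop (𝓝 c)) :
    ∃ a : M, Tendsto (fun n => ∏ i ∈ Finset.range n, x i) atTop (𝓝 a) ∧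
      ∀ σ : Equiv.Perm ℕ,
        Tendsto (fun n => ∏ i ∈ Finset.range n, x (σ i)) atTop (𝓝 a) := by
  obtain ⟨χ₀, hχ₀, c, hc, hlim⟩ := h
  set ψ : (M → ℝ) → ℝ := fun χ => ⨅ G : Finset ℕ, ∏ i ∈ G, χ (x i) with hψ
  have key : ∀ χ ∈ S, ∀ σ : Equiv.Perm ℕ,
      Tendsto (fun n => ∏ i ∈ Finset.range n, χ (x (σ i))) atTop (𝓝 (ψ χ)) := by
    intro χ hχ σ
    have heq : ∀ n, (∏ j ∈ (Finset.range n).image σ, χ (x j))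
        = ∏ i ∈ Finset.range n, χ (x (σ i)) := fun n =>
      Finset.prod_image (fun a _ b _ hab => σ.injective hab)
    simp only [← heq]
    exact tendsto_prod_finsets' (fun i => hS.mem_Icc χ hχ (x i))
      (fun n m hnm => Finset.image_subset_image (Finset.range_subset_range.mpr hnm))
      (fun m => ⟨σ.symm m + 1, Finset.mem_image.mpr
        ⟨σ.symm m, Finset.mem_range.mpr (Nat.lt_succ_self _), σ.apply_symm_apply m⟩⟩)
  have hψ0 : ψ χ₀ ≠ 0 := by
    have h1 : Tendsto (fun n => ∏ i ∈ Finset.range n, χ₀ (x i)) atTop (𝓝 (ψ χ₀)) := by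
      have := key χ₀ hχ₀ 1
      simpa using this
    have := tendsto_nhds_unique h1 hlim
    rw [this]
    exact ne_of_gt hc
  have main : ∀ σ : Equiv.Perm ℕ, ∃ a : M,
      Tendsto (fun n => ∏ i ∈ Finset.range n, x (σ i)) atTop (𝓝 a) ∧
      ∀ χ ∈ S, ψ χ = χ a := by
    intro σ
    apply hS.limit_exists _ ψ _ ⟨χ₀, hχ₀, hψ0⟩
    intro χ hχ
    have heq : ∀ n, χ (∏ i ∈ Finset.range n, x (σ i))
        = ∏ i ∈ Finset.range n, χ (x (σ i)) :=
      fun n => char_prod' (hS.map_one χ hχ) (hS.map_mul χ hχ) _ _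
    simp only [heq]
    exact key χ hχ σ
  obtain ⟨a, ha, haχ⟩ := main 1
  refine ⟨a, by simpa using ha, fun σ => ?_⟩
  obtain ⟨a', ha', haχ'⟩ := main σ
  have : a = a' := hS.sep' fun χ hχ => (haχ χ hχ).symm.trans (haχ' χ hχ)
  rwa [this]
end

section
/- Let (M, M̃) be a Feller topological monoid. Then the Borel σ-algebra B(M) of (M, τ), the σ-algebra σ(M̃) generated by the characters in M̃, and the Borel σ-algebra B(τ_{M̃}) of the metric topology τ_{M̃} induced by ρ_{M̃} all coincide. -/
open Filter Topology MeasureTheory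

/-- The metric `ρ_{M̃}(x,y) = ∑_{n≥1} 2^{-n} |χ_n x - χ_n y|` associated with an
enumeration `(χ_n)` of the determining class (here indexed by `ℕ` starting at `0`,
with weights `2^{-(n+1)}`). -/
noncomputable def rhoDist {M : Type*} (e : ℕ → M → ℝ) (x y : M) : ℝ :=
  ∑' n : ℕ, |e n x - e n y| / 2 ^ (n + 1)

/-- The topology `τ_{M̃}` induced by the metric `ρ_{M̃}`: the topology generated
by the open balls of `rhoDist e`. -/
def rhoTopology {M : Type*} (e : ℕ → M → ℝ) : TopologicalSpace M :=
  TopologicalSpace.generateFrom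
    {U | ∃ (x : M) (ε : ℝ), 0 < ε ∧ U = {y | rhoDist e x y < ε}}

set_option linter.unusedSectionVars false

namespace FellerAux

variable {M : Type*} [TopologicalSpace M] [CommMonoid M] [MeasurableSpace M]
  {S : Set (M → ℝ)} {e : ℕ → M → ℝ}

lemma exists_ne_zero (hS : FellerClass M S) (a : M) : ∃ χ ∈ S, χ a ≠ 0 := by
  by_contra h
  push_neg at h
  have hcc : Tendsto (fun _ : ℕ => a) atTop (cocompact M) := by
    rw [← hS.tendsto_zero_iff]
    intro χ hχ
    rw [show (fun _ : ℕ => χ a) = fun _ : ℕ => (0:ℝ) from funext fun _ => h χ hχ]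
    exact tendsto_const_nhds
  have h2 : ({a}ᶜ : Set M) ∈ cocompact M :=
    hasBasis_cocompact.mem_of_mem isCompact_singleton
  obtain ⟨n, hn⟩ := (hcc.eventually_mem h2).exists
  exact hn rfl

lemma injective_aux [T2Space M] (hS : FellerClass M S) {a b : M}
    (h : ∀ χ ∈ S, χ a = χ b) : a = b := by
  obtain ⟨χ₀, hχ₀, h0⟩ := exists_ne_zero hS a
  set x : ℕ → M := fun n => if n % 2 = 0 then a else b with hx
  have hconv : ∀ χ ∈ S, Tendsto (fun n => χ (x n)) atTop (𝓝 ((fun χ => χ a) χ)) := by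
    intro χ hχ
    have : (fun n => χ (x n)) = fun _ => χ a := by
      funext n; by_cases hn : n % 2 = 0 <;> simp [hx, hn, h χ hχ]
    rw [this]; exact tendsto_const_nhds
  obtain ⟨c, hc, -⟩ := hS.limit_exists x (fun χ => χ a) hconv ⟨χ₀, hχ₀, h0⟩
  have h2 : Tendsto (fun n => x (2 * n)) atTop (𝓝 c) :=
    hc.comp (tendsto_atTop_mono (fun n => by simp only [id_eq]; omega) tendsto_id)
  have h3 : Tendsto (fun n => x (2 * n + 1)) atTop (𝓝 c) :=
    hc.comp (tendsto_atTop_mono (fun n => by simp only [id_eq]; omega) tendsto_id)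
  have ha : a = c := by simpa [hx, Nat.mul_mod_right] using h2
  have hb : b = c := by simpa [hx, Nat.mul_add_mod] using h3
  rw [ha, hb]

lemma tendsto_of_char_tendsto [T2Space M] (hS : FellerClass M S) (x : ℕ → M) (a : M)
    (h : ∀ χ ∈ S, Tendsto (fun k => χ (x k)) atTop (𝓝 (χ a))) :
    Tendsto x atTop (𝓝 a) := by
  obtain ⟨χ₀, hχ₀, h0⟩ := exists_ne_zero hS a
  obtain ⟨c, hc, hψ⟩ := hS.limit_exists x (fun χ => χ a) h ⟨χ₀, hχ₀, h0⟩
  have : a = c := injective_aux hS (fun χ hχ => hψ χ hχ)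
  rwa [← this] at hc


lemma char_tendsto_of_tendsto [T2Space M] [LocallyCompactSpace M]
    [FirstCountableTopology M]
    (hS : FellerClass M S) (he : S = Set.range e)
    {x : ℕ → M} {p : M} (hx : Tendsto x atTop (𝓝 p)) :
    ∀ χ ∈ S, Tendsto (fun k => χ (x k)) atTop (𝓝 (χ p)) := by
  intro χ hχ
  refine tendsto_of_subseq_tendsto fun ns hns => ?_
  have hxy : Tendsto (fun k => x (ns k)) atTop (𝓝 p) := hx.comp hns
  have hIcc : ∀ (n : ℕ) (z : M), e n z ∈ Set.Icc (0:ℝ) 1 := fun n z =>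
    hS.mem_Icc (e n) (he ▸ Set.mem_range_self n) z
  set F : ℕ → (ℕ → Set.Icc (0:ℝ) 1) :=
    fun k n => ⟨e n (x (ns k)), hIcc n _⟩ with hF
  obtain ⟨L, ms, hms, hL⟩ := CompactSpace.tendsto_subseq F
  set y : ℕ → M := fun k => x (ns (ms k)) with hy'
  have hyp : Tendsto y atTop (𝓝 p) := hxy.comp hms.tendsto_atTop
  have hcoord : ∀ n, Tendsto (fun k => e n (y k)) atTop (𝓝 (L n : ℝ)) := by
    intro n
    have h1 := tendsto_pi_nhds.mp hL n
    exact (continuous_subtype_val.tendsto _).comp h1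
  set ψ : (M → ℝ) → ℝ := fun χ' => limUnder atTop (fun k => χ' (y k)) with hψdef
  have hψ : ∀ χ' ∈ S, Tendsto (fun k => χ' (y k)) atTop (𝓝 (ψ χ')) := by
    intro χ' hχ'
    rw [he] at hχ'
    obtain ⟨n, rfl⟩ := hχ'
    have : ψ (e n) = L n := (hcoord n).limUnder_eq
    rw [this]
    exact hcoord n
  by_cases hzero : ∀ χ' ∈ S, ψ χ' = 0
  · exfalso
    have hcc : Tendsto y atTop (cocompact M) := by
      rw [← hS.tendsto_zero_iff]
      intro χ' hχ'
      have h1 := hψ χ' hχ'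
      rwa [hzero χ' hχ'] at h1
    obtain ⟨K, hK, hKmem⟩ := exists_compact_mem_nhds p
    have h1 : ∀ᶠ k in atTop, y k ∈ K := hyp.eventually_mem hKmem
    have h2 : ∀ᶠ k in atTop, y k ∈ Kᶜ :=
      hcc.eventually_mem (hasBasis_cocompact.mem_of_mem hK)
    obtain ⟨k, hk1, hk2⟩ := (h1.and h2).exists
    exact hk2 hk1
  · push_neg at hzero
    obtain ⟨a, ha, haψ⟩ := hS.limit_exists y ψ hψ hzero
    have hap : a = p := tendsto_nhds_unique ha hyp
    refine ⟨ms, ?_⟩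
    have h1 := hψ χ hχ
    rwa [haψ χ hχ, hap] at h1

lemma char_continuous [T2Space M] [LocallyCompactSpace M] [SecondCountableTopology M]
    (hS : FellerClass M S) (he : S = Set.range e) {χ : M → ℝ} (hχ : χ ∈ S) :
    Continuous χ := by
  apply SeqContinuous.continuous
  intro x p hx
  exact char_tendsto_of_tendsto hS he hx χ hχ


section Rho

variable (hIcc : ∀ (n : ℕ) (z : M), e n z ∈ Set.Icc (0:ℝ) 1)
include hIcc

lemma rho_term_le (x y : M) (n : ℕ) :
    |e n x - e n y| / 2 ^ (n + 1) ≤ (1/2 : ℝ) ^ n := by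
  have h1 : |e n x - e n y| ≤ 1 := by
    obtain ⟨hx0, hx1⟩ := hIcc n x
    obtain ⟨hy0, hy1⟩ := hIcc n y
    rw [abs_sub_le_iff]; constructor <;> linarith
  calc |e n x - e n y| / 2 ^ (n + 1) ≤ 1 / 2 ^ (n + 1) := by gcongr
    _ ≤ 1 / 2 ^ n := by gcongr <;> norm_num
    _ = (1/2 : ℝ) ^ n := by rw [one_div_pow]

lemma rho_summable (x y : M) :
    Summable (fun n => |e n x - e n y| / 2 ^ (n + 1)) :=
  Summable.of_nonneg_of_le (fun n => by positivity)
    (fun n => rho_term_le hIcc x y n) summable_geometric_two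

lemma rho_nonneg (x y : M) : 0 ≤ rhoDist e x y :=
  tsum_nonneg fun n => by positivity

lemma rho_self (x : M) : rhoDist e x x = 0 := by
  simp [rhoDist]

lemma rho_symm (x y : M) : rhoDist e x y = rhoDist e y x :=
  tsum_congr fun n => by rw [abs_sub_comm]

lemma coord_le_rho (x y : M) (n : ℕ) :
    |e n x - e n y| / 2 ^ (n + 1) ≤ rhoDist e x y :=
  Summable.le_tsum (rho_summable hIcc x y) n (fun m _ => by positivity)

lemma rho_triangle (x y z : M) :
    rhoDist e x z ≤ rhoDist e x y + rhoDist e y z := by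
  rw [rhoDist, rhoDist, rhoDist, ← Summable.tsum_add (rho_summable hIcc x y) (rho_summable hIcc y z)]
  refine Summable.tsum_le_tsum (fun n => ?_) (rho_summable hIcc x z)
    ((rho_summable hIcc x y).add (rho_summable hIcc y z))
  rw [← add_div]
  gcongr
  exact abs_sub_le _ _ _

lemma rho_continuous (hcont : ∀ n, Continuous (e n)) (x : M) :
    Continuous (fun y => rhoDist e x y) := by
  refine continuous_tsum (f := fun n y => |e n x - e n y| / 2 ^ (n + 1))
    (u := fun n => (1/2 : ℝ) ^ n) (fun n => ?_) summable_geometric_two (fun n y => ?_)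
  · exact ((continuous_const.sub (hcont n)).abs).div_const _
  · rw [Real.norm_eq_abs, abs_of_nonneg (by positivity)]
    exact rho_term_le hIcc x y n

lemma rho_measurable {m : MeasurableSpace M} (hm : ∀ n, Measurable[m] (e n)) (x : M) :
    Measurable[m] (fun y => rhoDist e x y) := by
  have hterm : ∀ n, Measurable[m] (fun y => |e n x - e n y| / 2 ^ (n + 1)) := fun n =>
    ((measurable_const.sub (hm n)).abs).div_const _
  refine measurable_of_tendsto_metrizable
    (f := fun k y => ∑ n ∈ Finset.range k, |e n x - e n y| / 2 ^ (n + 1))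
    (fun k => Finset.measurable_sum _ fun n _ => hterm n) ?_
  rw [tendsto_pi_nhds]
  intro y
  exact (rho_summable hIcc x y).hasSum.tendsto_sum_nat

end Rho

lemma generateOpen_of_balls {α : Type*} (d : α → α → ℝ) (hd : ∀ x, d x x = 0)
    {U : Set α} (h : ∀ x ∈ U, ∃ ε : ℝ, 0 < ε ∧ {y | d x y < ε} ⊆ U) :
    TopologicalSpace.GenerateOpen {V | ∃ x ε, 0 < ε ∧ V = {y | d x y < ε}} U := by
  letI t : TopologicalSpace α :=
    TopologicalSpace.generateFrom {V | ∃ x ε, 0 < ε ∧ V = {y | d x y < ε}}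
  show IsOpen U
  rw [isOpen_iff_forall_mem_open]
  intro x hx
  obtain ⟨ε, hε, hsub⟩ := h x hx
  exact ⟨{y | d x y < ε}, hsub,
    TopologicalSpace.isOpen_generateFrom_of_mem ⟨x, ε, hε, rfl⟩, by simp [hd, hε]⟩

lemma exists_ball_subset [T2Space M] [LocallyCompactSpace M] [SecondCountableTopology M]
    (hS : FellerClass M S) (he : S = Set.range e)
    {U : Set M} (hU : IsOpen U) {x : M} (hx : x ∈ U) :
    ∃ ε : ℝ, 0 < ε ∧ {y | rhoDist e x y < ε} ⊆ U := by
  have hIcc : ∀ (n : ℕ) (z : M), e n z ∈ Set.Icc (0:ℝ) 1 := fun n z =>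
    hS.mem_Icc (e n) (he ▸ Set.mem_range_self n) z
  by_contra h
  push_neg at h
  have hy : ∀ k : ℕ, ∃ y, rhoDist e x y < 1/((k:ℝ)+1) ∧ y ∉ U := by
    intro k
    obtain ⟨y, hy1, hy2⟩ := Set.not_subset.mp (h (1/((k:ℝ)+1)) (by positivity))
    exact ⟨y, hy1, hy2⟩
  choose y h1 h2 using hy
  have hten : Tendsto y atTop (𝓝 x) := by
    apply tendsto_of_char_tendsto hS
    intro χ hχ
    rw [he] at hχ
    obtain ⟨n, rfl⟩ := hχ
    rw [tendsto_iff_dist_tendsto_zero]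
    refine squeeze_zero (f := fun k => dist (e n (y k)) (e n x)) (g := fun k => 2 ^ (n+1) * (1/((k:ℝ)+1))) (fun k => dist_nonneg) (fun k => ?_) ?_
    · show dist (e n (y k)) (e n x) ≤ 2 ^ (n+1) * (1/((k:ℝ)+1))
      have hco := coord_le_rho hIcc x (y k) n
      rw [Real.dist_eq, abs_sub_comm]
      calc |e n x - e n (y k)|
          = 2 ^ (n+1) * (|e n x - e n (y k)| / 2 ^ (n+1)) := by field_simp
        _ ≤ 2 ^ (n+1) * rhoDist e x (y k) := by gcongr
        _ ≤ 2 ^ (n+1) * (1/((k:ℝ)+1)) := by gcongr; exact (h1 k).le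
    · simpa using tendsto_one_div_add_atTop_nhds_zero_nat.const_mul (2 ^ (n+1) : ℝ)
  obtain ⟨k, hk⟩ := (hten.eventually_mem (hU.mem_nhds hx)).exists
  exact h2 k hk

lemma rho_topology_eq [T2Space M] [LocallyCompactSpace M] [SecondCountableTopology M]
    (hS : FellerClass M S) (he : S = Set.range e) :
    rhoTopology e = (inferInstance : TopologicalSpace M) := by
  have hIcc : ∀ (n : ℕ) (z : M), e n z ∈ Set.Icc (0:ℝ) 1 := fun n z =>
    hS.mem_Icc (e n) (he ▸ Set.mem_range_self n) z
  have hcont : ∀ n, Continuous (e n) := fun n =>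
    char_continuous hS he (he ▸ Set.mem_range_self n)
  apply le_antisymm
  · rw [TopologicalSpace.le_def]
    intro U hU
    exact generateOpen_of_balls (rhoDist e) (rho_self hIcc)
      (fun x hx => exists_ball_subset hS he hU hx)
  · refine le_generateFrom ?_
    rintro U ⟨x, ε, hε, rfl⟩
    exact isOpen_lt (rho_continuous hIcc hcont x) continuous_const

lemma isOpen_measurable' [SecondCountableTopology M]
    (hIcc : ∀ (n : ℕ) (z : M), e n z ∈ Set.Icc (0:ℝ) 1)
    (hcont : ∀ n, Continuous (e n))
    (hballs : ∀ {U : Set M}, IsOpen U → ∀ {x : M}, x ∈ U →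
      ∃ ε : ℝ, 0 < ε ∧ {y | rhoDist e x y < ε} ⊆ U)
    {m : MeasurableSpace M} (hm : ∀ n, Measurable[m] (e n))
    {U : Set M} (hU : IsOpen U) : MeasurableSet[m] U := by
  obtain ⟨D, hDc, hDd⟩ := TopologicalSpace.exists_countable_dense M
  have hball : ∀ (d : M) (q : ℝ), MeasurableSet[m] {y | rhoDist e d y < q} := fun d q =>
    rho_measurable hIcc hm d measurableSet_Iio
  have hrep : U = ⋃ p ∈ {p : M × ℚ | p.1 ∈ D ∧ 0 < (p.2:ℝ) ∧
      {y | rhoDist e p.1 y < (p.2:ℝ)} ⊆ U}, {y | rhoDist e p.1 y < (p.2:ℝ)} := by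
    ext z
    simp only [Set.mem_iUnion, Set.mem_setOf_eq]
    constructor
    · intro hz
      obtain ⟨ε, hε, hsub⟩ := hballs hU hz
      obtain ⟨q, hq0, hq2⟩ := exists_rat_btwn (show (0:ℝ) < ε/2 by positivity)
      have hball_open : IsOpen {w | rhoDist e z w < (q:ℝ)} :=
        isOpen_lt (rho_continuous hIcc hcont z) continuous_const
      obtain ⟨d, hdD, hd⟩ := hDd.exists_mem_open hball_open
        ⟨z, by simpa [rho_self hIcc] using hq0⟩
      refine ⟨(d, q), ⟨hdD, by exact hq0, fun w hw => hsub ?_⟩, ?_⟩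
      · show rhoDist e z w < ε
        calc rhoDist e z w ≤ rhoDist e z d + rhoDist e d w := rho_triangle hIcc z d w
          _ < q + q := add_lt_add hd hw
          _ < ε := by linarith
      · show rhoDist e d z < (q:ℝ)
        rw [rho_symm hIcc]; exact hd
    · rintro ⟨p, ⟨-, -, hsub⟩, hz⟩
      exact hsub hz
  rw [hrep]
  refine MeasurableSet.biUnion ?_ fun p _ => hball p.1 p.2
  exact ((hDc.prod Set.countable_univ).mono
    (fun p hp => Set.mem_prod.mpr ⟨hp.1, Set.mem_univ _⟩))

end FellerAux

/-- the Borel σ-algebra of `(M, τ)`, the σ-algebra generated by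
the characters of the determining class `S`, and the Borel σ-algebra of the
metric topology `τ_{M̃}` induced by `ρ_{M̃}` all coincide. -/
theorem FellerClass.sigma_algebras_eq {M : Type*} [TopologicalSpace M] [CommMonoid M]
    [ContinuousMul M] [LocallyCompactSpace M] [SecondCountableTopology M] [T2Space M]
    [MeasurableSpace M] [BorelSpace M]
    {S : Set (M → ℝ)} (hS : FellerClass M S)
    (e : ℕ → M → ℝ) (he : S = Set.range e) :
    borel M = (⨆ χ ∈ S, MeasurableSpace.comap χ (borel ℝ)) ∧
      borel M = @borel M (rhoTopology e) := by
  have hIcc : ∀ (n : ℕ) (z : M), e n z ∈ Set.Icc (0:ℝ) 1 := fun n z =>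
    hS.mem_Icc (e n) (he ▸ Set.mem_range_self n) z
  have hcont : ∀ n, Continuous (e n) := fun n =>
    FellerAux.char_continuous hS he (he ▸ Set.mem_range_self n)
  constructor
  · apply le_antisymm
    · have hm : ∀ n,
          Measurable[⨆ χ ∈ S, MeasurableSpace.comap χ (borel ℝ)] (e n) := fun n => by
        rw [measurable_iff_comap_le, BorelSpace.measurable_eq (α := ℝ)]
        exact le_biSup (fun χ => MeasurableSpace.comap χ (borel ℝ)) (he ▸ Set.mem_range_self n)
      have hb : ∀ U ∈ {s : Set M | IsOpen s},
          MeasurableSet[⨆ χ ∈ S, MeasurableSpace.comap χ (borel ℝ)] U :=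
        fun U hU => FellerAux.isOpen_measurable' hIcc hcont
          (fun {V} hV {x} hx => FellerAux.exists_ball_subset hS he hV hx) hm hU
      exact MeasurableSpace.generateFrom_le hb
    · refine iSup₂_le fun χ hχ => ?_
      have h1 : MeasurableSpace.comap χ (borel ℝ) ≤ ‹MeasurableSpace M› := by
        rw [← BorelSpace.measurable_eq (α := ℝ)]
        exact measurable_iff_comap_le.mp (hS.measurable χ hχ)
      rwa [BorelSpace.measurable_eq (α := M)] at h1
  · rw [FellerAux.rho_topology_eq hS he]
end

section
/- Let (M, M̃) be a Feller topological monoid. Then (M, ⊕) is idempotent (i.e., x ⊕ x = x for all x ∈ M) if and only if every character χ ∈ M̃ takes values only in {0, 1}. -/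
open Filter Topology MeasureTheory

/-- a Feller topological monoid is idempotent (`x ⊕ x = x` for all
`x`) if and only if every character in the determining class takes values only
in `{0, 1}`. -/
theorem FellerClass.idempotent_iff {M : Type*} [TopologicalSpace M] [CommMonoid M]
    [ContinuousMul M] [LocallyCompactSpace M] [SecondCountableTopology M] [T2Space M]
    [MeasurableSpace M] [BorelSpace M]
    {S : Set (M → ℝ)} (hS : FellerClass M S) :
    (∀ x : M, x * x = x) ↔ ∀ χ ∈ S, ∀ x : M, χ x = 0 ∨ χ x = 1 := by
  
  constructor
  · intro hid χ hχ x
    have h := hS.map_mul χ hχ x x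
    rw [hid x] at h
    have : χ x * (χ x - 1) = 0 := by ring_nf; linarith [h]
    rcases mul_eq_zero.1 this with h' | h'
    · exact Or.inl h'
    · exact Or.inr (by linarith)
  · intro h01 x
    -- some character is nonzero at x
    have hne : ∃ χ ∈ S, χ x ≠ 0 := by
      by_contra hc
      push_neg at hc
      have hz : ∀ χ ∈ S, Tendsto (fun _ : ℕ => χ x) atTop (𝓝 0) := by
        intro χ hχ
        simp [hc χ hχ]
      have := (hS.tendsto_zero_iff (fun _ => x)).1 hz
      have hmem : {x}ᶜ ∈ cocompact M :=
        mem_cocompact.2 ⟨{x}, isCompact_singleton, le_refl _⟩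
      have := this hmem
      simp at this
    set y : ℕ → M := fun n => if Even n then x else x * x with hy
    have hconst : ∀ χ ∈ S, ∀ n, χ (y n) = χ x := by
      intro χ hχ n
      by_cases hn : Even n
      · simp [hy, hn]
      · have := hS.map_mul χ hχ x x
        rcases h01 χ hχ x with h' | h' <;> simp [hy, hn, this, h']
    have htend : ∀ χ ∈ S, Tendsto (fun n => χ (y n)) atTop (𝓝 (χ x)) := by
      intro χ hχ
      have : (fun n => χ (y n)) = fun _ => χ x := funext (hconst χ hχ)
      rw [this]; exact tendsto_const_nhds
    obtain ⟨a, ha, -⟩ := hS.limit_exists y (fun χ => χ x) htend hne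
    have h1 : Tendsto (fun n : ℕ => y (2 * n)) atTop (𝓝 a) :=
      ha.comp (tendsto_atTop_atTop_of_monotone (fun i j hij => by omega)
        (fun b => ⟨b, by omega⟩))
    have h2 : Tendsto (fun n : ℕ => y (2 * n + 1)) atTop (𝓝 a) :=
      ha.comp (tendsto_atTop_atTop_of_monotone (fun i j hij => by omega)
        (fun b => ⟨b, by omega⟩))
    have e1 : (fun n : ℕ => y (2 * n)) = fun _ => x := by
      funext n; simp [hy, even_two_mul n]
    have e2 : (fun n : ℕ => y (2 * n + 1)) = fun _ => x * x := by
      funext n; simp [hy, Nat.even_add_one, even_two_mul n]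
    rw [e1] at h1; rw [e2] at h2
    have hx : x = a := tendsto_nhds_unique tendsto_const_nhds h1
    have hxx : x * x = a := tendsto_nhds_unique tendsto_const_nhds h2
    rw [hxx, hx]
end

section
/- Let (M, M̃) be a Feller topological monoid such that (M, ⊕) is idempotent (x ⊕ x = x for all x ∈ M). Then every character χ ∈ M̃ is upper semicontinuous: for every sequence (x_n) in M converging to x ∈ M, limsup_n χ(x_n) ≤ χ(x). -/
open Filter Topology MeasureTheory

/-- if a Feller topological monoid is idempotent, then every
character in the determining class is (sequentially) upper semicontinuous:
along any convergent sequence `x_n → a` in `M`,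
`limsup_n χ(x_n) ≤ χ(a)`. -/
theorem FellerClass.upperSemicontinuous_of_idempotent {M : Type*} [TopologicalSpace M]
    [CommMonoid M] [ContinuousMul M] [LocallyCompactSpace M] [SecondCountableTopology M]
    [T2Space M] [MeasurableSpace M] [BorelSpace M]
    {S : Set (M → ℝ)} (hS : FellerClass M S)
    (hidem : ∀ x : M, x * x = x) :
    ∀ χ ∈ S, ∀ (x : ℕ → M) (a : M), Tendsto x atTop (𝓝 a) →
      Filter.limsup (fun n => χ (x n)) atTop ≤ χ a := by
  -- every character takes only values 0 and 1
  have h01 : ∀ χ ∈ S, ∀ x : M, χ x = 0 ∨ χ x = 1 := by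
    intro χ hχ x
    have h : χ x * χ x = χ x := by rw [← hS.map_mul χ hχ, hidem]
    have h2 : χ x * (χ x - 1) = 0 := by ring_nf; linarith
    rcases mul_eq_zero.mp h2 with h3 | h3
    · exact Or.inl h3
    · exact Or.inr (by linarith)
  intro χ hχ x a hx
  rcases h01 χ hχ a with ha | ha
  · -- χ a = 0 : show the sequence is eventually 0
    rw [ha]
    have key : ∀ᶠ n in atTop, χ (x n) = 0 := by
      by_contra hcon
      have hfreq : ∃ᶠ n in atTop, χ (x n) = 1 := by
        refine (Filter.not_eventually.mp hcon).mono fun n hn => ?_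
        rcases h01 χ hχ (x n) with h | h
        · exact absurd h hn
        · exact h
      obtain ⟨φ, hφmono, hφ⟩ := Filter.extraction_of_frequently_atTop hfreq
      set y : ℕ → M := x ∘ φ with hy
      have hya : Tendsto y atTop (𝓝 a) := hx.comp hφmono.tendsto_atTop
      -- enumerate S
      obtain ⟨f, hf⟩ := hS.countable.exists_eq_range hS.nonempty
      have hfS : ∀ n, f n ∈ S := fun n => hf ▸ Set.mem_range_self n
      -- diagonal extraction in the compact metrizable space ℕ → [0,1]
      set g : ℕ → (ℕ → Set.Icc (0 : ℝ) 1) :=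
        fun k n => ⟨f n (y k), hS.mem_Icc (f n) (hfS n) (y k)⟩ with hg
      obtain ⟨ℓ, -, σ, hσmono, hσ⟩ :=
        isCompact_univ.tendsto_subseq (x := g) (fun k => Set.mem_univ _)
      set z : ℕ → M := y ∘ σ with hz
      have hcomp : ∀ n : ℕ, Tendsto (fun k => f n (z k)) atTop (𝓝 (ℓ n : ℝ)) := by
        intro n
        have := (tendsto_pi_nhds.mp hσ) n
        exact (continuous_subtype_val.tendsto _).comp this
      -- the candidate limit function
      have hconv : ∀ χ' ∈ S, ∃ c : ℝ, Tendsto (fun k => χ' (z k)) atTop (𝓝 c) := by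
        intro χ' hχ'
        rw [hf] at hχ'
        obtain ⟨n, rfl⟩ := hχ'
        exact ⟨ℓ n, hcomp n⟩
      set ψ : (M → ℝ) → ℝ := fun χ' => limUnder atTop (fun k => χ' (z k)) with hψ
      have hψconv : ∀ χ' ∈ S, Tendsto (fun k => χ' (z k)) atTop (𝓝 (ψ χ')) := by
        intro χ' hχ'
        obtain ⟨c, hc⟩ := hconv χ' hχ'
        show Tendsto _ atTop (𝓝 (limUnder atTop fun k => χ' (z k)))
        rwa [hc.limUnder_eq]
      -- χ along z is constantly 1
      have hχz : Tendsto (fun k => χ (z k)) atTop (𝓝 1) := by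
        have : (fun k => χ (z k)) = fun _ => (1 : ℝ) := by
          funext k; exact hφ (σ k)
        rw [this]; exact tendsto_const_nhds
      have hψχ : ψ χ = 1 := tendsto_nhds_unique (hψconv χ hχ) hχz
      obtain ⟨b, hzb, hvals⟩ := hS.limit_exists z ψ hψconv ⟨χ, hχ, by rw [hψχ]; norm_num⟩
      have hza : Tendsto z atTop (𝓝 a) := hya.comp hσmono.tendsto_atTop
      have hba : b = a := tendsto_nhds_unique hzb hza
      have : (1 : ℝ) = 0 := by
        rw [← hψχ, hvals χ hχ, hba, ha]
      norm_num at this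
    have : Tendsto (fun n => χ (x n)) atTop (𝓝 0) := by
      refine Tendsto.congr' ?_ tendsto_const_nhds
      exact key.mono fun n hn => hn.symm
    exact le_of_eq this.limsup_eq
  · -- χ a = 1 : limsup ≤ 1 since all values ≤ 1
    rw [ha]
    refine Filter.limsup_le_of_le ?_ ?_
    · exact isCoboundedUnder_le_of_le atTop fun n => (hS.mem_Icc χ hχ (x n)).1
    · exact Filter.Eventually.of_forall fun n => (hS.mem_Icc χ hχ (x n)).2
end

section
/- Let (M, M̃) be a Feller topological monoid. If μ₁ and μ₂ are two finite Borel measures on M such that their Laplace transforms coincide on M̃, i.e., ∫_M χ(x) μ₁(dx) = ∫_M χ(x) μ₂(dx) for every χ ∈ M̃, then μ₁ = μ₂. -/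
open Filter Topology MeasureTheory

/-- A locally compact second countable T2 space is Polish. -/
theorem FellerAux.polish_of_lch (X : Type*) [TopologicalSpace X] [LocallyCompactSpace X]
    [SecondCountableTopology X] [T2Space X] : PolishSpace X := by
  letI : MetricSpace X := TopologicalSpace.metrizableSpaceMetric X
  set C := UniformSpace.Completion X with hC
  haveI : TopologicalSpace.SeparableSpace C :=
    UniformSpace.Completion.denseRange_coe.separableSpace
      (UniformSpace.Completion.continuous_coe X)
  haveI : SecondCountableTopology C := UniformSpace.secondCountable_of_separable C
  haveI : PolishSpace C := inferInstance
  have emb : Topology.IsEmbedding ((↑) : X → C) :=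
    (UniformSpace.Completion.coe_isometry).isEmbedding
  have hopen : IsOpen (Set.range ((↑) : X → C)) := by
    rw [isOpen_iff_mem_nhds]
    rintro _ ⟨x, rfl⟩
    obtain ⟨K, hK, hKx⟩ := exists_compact_mem_nhds x
    rw [emb.nhds_eq_comap, Filter.mem_comap] at hKx
    obtain ⟨U, hU, hUK⟩ := hKx
    obtain ⟨V, hVU, hV, hxV⟩ := mem_nhds_iff.mp hU
    have himg : IsClosed ((↑) '' K : Set C) :=
      (hK.image (UniformSpace.Completion.continuous_coe X)).isClosed
    have hsub : V ⊆ Set.range ((↑) : X → C) := by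
      intro v hv
      have hvcl : v ∈ closure (V ∩ Set.range ((↑) : X → C)) :=
        UniformSpace.Completion.denseRange_coe.open_subset_closure_inter hV hv
      have hVK : V ∩ Set.range ((↑) : X → C) ⊆ (↑) '' K := by
        rintro _ ⟨hw, y, rfl⟩
        exact ⟨y, hUK (hVU hw), rfl⟩
      have := (closure_mono hVK) hvcl
      rw [himg.closure_eq] at this
      exact Set.image_subset_range _ _ this
    exact Filter.mem_of_superset (hV.mem_nhds hxV) hsub
  haveI : PolishSpace (Set.range ((↑) : X → C)) := hopen.polishSpace
  exact ((emb.toHomeomorph).isClosedEmbedding).polishSpace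

section Aux

variable {M : Type*} [TopologicalSpace M] [CommMonoid M] [MeasurableSpace M] {S : Set (M → ℝ)}

/-- At every point, some character is nonzero. -/
theorem FellerClass.exists_ne_zero (hS : FellerClass M S) [T1Space M] (x : M) :
    ∃ χ ∈ S, χ x ≠ 0 := by
  by_contra hcon
  push_neg at hcon
  have h0 : ∀ χ ∈ S, Tendsto (fun _ : ℕ => χ x) atTop (𝓝 0) := by
    intro χ hχ
    rw [hcon χ hχ]
    exact tendsto_const_nhds
  have hten := (hS.tendsto_zero_iff (fun _ => x)).mp h0
  have hmem : ({x} : Set M)ᶜ ∈ cocompact M :=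
    mem_cocompact.mpr ⟨{x}, isCompact_singleton, subset_rfl⟩
  have hpre := hten hmem
  rw [Filter.mem_map] at hpre
  have hempty : (fun _ : ℕ => x) ⁻¹' ({x} : Set M)ᶜ = ∅ := by
    ext n; simp
  rw [hempty] at hpre
  exact Filter.empty_notMem atTop hpre

/-- The characters separate points. -/
theorem FellerClass.eq_of_forall_char_eq (hS : FellerClass M S) [T2Space M] {x y : M}
    (hxy : ∀ χ ∈ S, χ x = χ y) : x = y := by
  obtain ⟨χ₀, hχ₀S, hχ₀⟩ := hS.exists_ne_zero x
  set z : ℕ → M := fun n => if Even n then x else y with hz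
  have hten : ∀ χ ∈ S, Tendsto (fun n => χ (z n)) atTop (𝓝 ((fun χ : M → ℝ => χ x) χ)) := by
    intro χ hχ
    have hconst : (fun n => χ (z n)) = fun _ => χ x := by
      funext n
      by_cases hn : Even n <;> simp [z, hn, hxy χ hχ]
    rw [hconst]
    exact tendsto_const_nhds
  obtain ⟨a, ha, -⟩ := hS.limit_exists z _ hten ⟨χ₀, hχ₀S, hχ₀⟩
  have h2 : Tendsto (fun k : ℕ => 2 * k) atTop atTop :=
    tendsto_atTop_mono (fun k => by show k ≤ 2 * k; omega) tendsto_id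
  have h3 : Tendsto (fun k : ℕ => 2 * k + 1) atTop atTop :=
    tendsto_atTop_mono (fun k => by show k ≤ 2 * k + 1; omega) tendsto_id
  have hxa : Tendsto (fun _ : ℕ => x) atTop (𝓝 a) := by
    have := ha.comp h2
    have heq : (z ∘ fun k : ℕ => 2 * k) = fun _ => x := by
      funext k
      simp [z, even_two_mul]
    rwa [heq] at this
  have hya : Tendsto (fun _ : ℕ => y) atTop (𝓝 a) := by
    have := ha.comp h3
    have heq : (z ∘ fun k : ℕ => 2 * k + 1) = fun _ => y := by
      funext k
      have : ¬ Even (2 * k + 1) := by simp [Nat.even_add_one, even_two_mul]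
      simp [z, this]
    rwa [heq] at this
  have h1 : x = a := tendsto_nhds_unique tendsto_const_nhds hxa
  have h2 : y = a := tendsto_nhds_unique tendsto_const_nhds hya
  rw [h1, h2]

end Aux

/-- Continuous functions on a compact space are integrable against finite measures. -/
theorem FellerAux.integrable_cont {X : Type*} [TopologicalSpace X] [CompactSpace X]
    [MeasurableSpace X] [OpensMeasurableSpace X] [SecondCountableTopology X]
    (κ : Measure X) [IsFiniteMeasure κ] (f : C(X, ℝ)) : Integrable f κ :=
  f.continuous.integrable_of_hasCompactSupport (isClosed_tsupport _).isCompact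

/-- Integration against a finite measure is continuous on `C(X, ℝ)`. -/
theorem FellerAux.continuous_integral_cont {X : Type*} [TopologicalSpace X] [CompactSpace X]
    [MeasurableSpace X] [OpensMeasurableSpace X] [SecondCountableTopology X]
    (κ : Measure X) [IsFiniteMeasure κ] :
    Continuous (fun f : C(X, ℝ) => ∫ x, f x ∂κ) := by
  refine LipschitzWith.continuous (K := (κ Set.univ).toNNReal)
    (LipschitzWith.of_dist_le_mul fun f g => ?_)
  rw [Real.dist_eq, ← integral_sub (FellerAux.integrable_cont κ f) (FellerAux.integrable_cont κ g)]
  have hb : ∀ x, ‖f x - g x‖ ≤ dist f g := by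
    intro x
    rw [← dist_eq_norm]
    exact ContinuousMap.dist_apply_le_dist x
  calc |∫ x, (f x - g x) ∂κ| ≤ dist f g * (κ Set.univ).toReal :=
        norm_integral_le_of_norm_le_const (Filter.Eventually.of_forall hb)
    _ = ↑(κ Set.univ).toNNReal * dist f g := by
        rw [mul_comm]; rfl

/-- two finite Borel measures on a Feller topological monoid
whose Laplace transforms agree on the determining class `S` (i.e.
`∫ χ dμ₁ = ∫ χ dμ₂` for all `χ ∈ S`) are equal. -/
theorem FellerClass.laplace_injective {M : Type*} [TopologicalSpace M] [CommMonoid M]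
    [ContinuousMul M] [LocallyCompactSpace M] [SecondCountableTopology M] [T2Space M]
    [MeasurableSpace M] [BorelSpace M]
    {S : Set (M → ℝ)} (hS : FellerClass M S)
    (μ₁ μ₂ : Measure M) [IsFiniteMeasure μ₁] [IsFiniteMeasure μ₂]
    (h : ∀ χ ∈ S, ∫ x, χ x ∂μ₁ = ∫ x, χ x ∂μ₂) :
    μ₁ = μ₂ := by
  classical
  haveI : PolishSpace M := FellerAux.polish_of_lch M
  haveI : Countable ↥S := hS.countable.to_subtype
  -- the evaluation map into the product of unit intervals
  set E := (↥S → unitInterval) with hE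
  set Φ : M → E := fun x χ => ⟨χ.1 x, hS.mem_Icc χ.1 χ.2 x⟩ with hΦ
  have hΦm : Measurable Φ :=
    measurable_pi_lambda _ fun χ => (hS.measurable χ.1 χ.2).subtype_mk
  have hΦi : Function.Injective Φ := by
    intro x y hxy
    refine hS.eq_of_forall_char_eq fun χ hχ => ?_
    exact Subtype.ext_iff.mp (congrFun hxy ⟨χ, hχ⟩)
  have hΦemb : MeasurableEmbedding Φ := hΦm.measurableEmbedding hΦi
  set κ₁ := μ₁.map Φ with hκ₁
  set κ₂ := μ₂.map Φ with hκ₂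
  -- evaluation maps and the zero point
  set ev : ↥S → C(E, ℝ) :=
    (fun χ => ⟨fun t => (t χ : ℝ), (continuous_subtype_val).comp (continuous_apply χ)⟩) with hev
  set z₀ : E := (fun _ => ⟨0, by norm_num⟩) with hz₀def
  have hz₀ : ∀ x : M, Φ x ≠ z₀ := by
    intro x hx
    obtain ⟨χ, hχS, hχ⟩ := hS.exists_ne_zero x
    exact hχ (Subtype.ext_iff.mp (congrFun hx ⟨χ, hχS⟩))
  set m₁ : ℝ := (κ₁ Set.univ).toReal with hm₁
  set m₂ : ℝ := (κ₂ Set.univ).toReal with hm₂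
  -- the key identity for all continuous functions on E
  have key : ∀ f : C(E, ℝ), ∫ t, f t ∂κ₁ + m₂ * f z₀ = ∫ t, f t ∂κ₂ + m₁ * f z₀ := by
    set V : Set C(E, ℝ) :=
      {f | ∫ t, f t ∂κ₁ + m₂ * f z₀ = ∫ t, f t ∂κ₂ + m₁ * f z₀} with hV
    have hVc : IsClosed V := by
      apply isClosed_eq
      · exact ((FellerAux.continuous_integral_cont κ₁).add
          (continuous_const.mul ((continuous_eval_const z₀))))
      · exact ((FellerAux.continuous_integral_cont κ₂).add
          (continuous_const.mul ((continuous_eval_const z₀))))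
    set A : Subalgebra ℝ C(E, ℝ) := Algebra.adjoin ℝ (Set.range ev) with hA
    have hsep : A.SeparatesPoints := by
      intro t t' htt'
      have : ∃ χ : ↥S, t χ ≠ t' χ := by
        by_contra hcon
        push_neg at hcon
        exact htt' (funext fun χ => hcon χ)
      obtain ⟨χ, hχ⟩ := this
      refine ⟨ev χ, ⟨ev χ, Algebra.subset_adjoin ⟨χ, rfl⟩, rfl⟩, ?_⟩
      simpa [ev, Subtype.ext_iff] using fun hc => hχ (Subtype.ext hc)
    have htop : A.topologicalClosure = ⊤ :=
      ContinuousMap.subalgebra_topologicalClosure_eq_top_of_separatesPoints A hsep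
    -- monomials satisfy a strengthened property
    have hmono : ∀ f ∈ Submonoid.closure (Set.range ev),
        f = 1 ∨ ∃ χ ∈ S, (∀ x : M, f (Φ x) = χ x) ∧ f z₀ = 0 := by
      intro f hf
      induction hf using Submonoid.closure_induction with
      | mem f hf =>
        obtain ⟨χ, rfl⟩ := hf
        exact Or.inr ⟨χ.1, χ.2, fun x => rfl, rfl⟩
      | one => exact Or.inl rfl
      | mul f g _ _ hf hg =>
        rcases hf with rfl | ⟨χf, hχfS, hχf, hfz⟩
        · rcases hg with rfl | ⟨χg, hχgS, hχg, hgz⟩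
          · exact Or.inl (one_mul 1)
          · exact Or.inr ⟨χg, hχgS, fun x => by simp [hχg x], by simp [hgz]⟩
        · rcases hg with rfl | ⟨χg, hχgS, hχg, hgz⟩
          · exact Or.inr ⟨χf, hχfS, fun x => by simp [hχf x], by simp [hfz]⟩
          · refine Or.inr ⟨fun x => χf x * χg x, hS.mul_mem χf hχfS χg hχgS,
              fun x => by simp [hχf x, hχg x], by simp [hfz]⟩
    -- monomials lie in V
    have hmonoV : ∀ f ∈ Submonoid.closure (Set.range ev), f ∈ V := by
      intro f hf
      rcases hmono f hf with rfl | ⟨χ, hχS, hχ, hfz⟩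
      · show (∫ t, (1 : C(E, ℝ)) t ∂κ₁) + m₂ * (1 : C(E, ℝ)) z₀
            = (∫ t, (1 : C(E, ℝ)) t ∂κ₂) + m₁ * (1 : C(E, ℝ)) z₀
        simp only [ContinuousMap.one_apply, integral_const, smul_eq_mul, mul_one]
        rw [measureReal_def, measureReal_def, ← hm₁, ← hm₂]
        ring
      · have hmap : ∀ (μ : Measure M), ∫ t, f t ∂(μ.map Φ) = ∫ x, χ x ∂μ := by
          intro μ
          rw [integral_map hΦm.aemeasurable f.continuous.aestronglyMeasurable]
          exact integral_congr_ae (Filter.Eventually.of_forall fun x => hχ x)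
        show (∫ t, f t ∂κ₁) + m₂ * f z₀ = (∫ t, f t ∂κ₂) + m₁ * f z₀
        rw [hκ₁, hκ₂, hmap μ₁, hmap μ₂, hfz, h χ hχS]
        ring
    -- hence all of A lies in V
    have hspanV : ∀ f ∈ Submodule.span ℝ (Submonoid.closure (Set.range ev) : Set C(E, ℝ)),
        f ∈ V := by
      intro f hf'
      induction hf' using Submodule.span_induction with
      | mem f hf => exact hmonoV f hf
      | zero =>
        show (∫ t, (0 : C(E, ℝ)) t ∂κ₁) + m₂ * (0 : C(E, ℝ)) z₀
            = (∫ t, (0 : C(E, ℝ)) t ∂κ₂) + m₁ * (0 : C(E, ℝ)) z₀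
        simp
      | add f g _ _ hf hg =>
        have hf : (∫ t, f t ∂κ₁) + m₂ * f z₀ = (∫ t, f t ∂κ₂) + m₁ * f z₀ := hf
        have hg : (∫ t, g t ∂κ₁) + m₂ * g z₀ = (∫ t, g t ∂κ₂) + m₁ * g z₀ := hg
        show (∫ t, (f + g) t ∂κ₁) + m₂ * (f + g) z₀ = (∫ t, (f + g) t ∂κ₂) + m₁ * (f + g) z₀
        simp only [ContinuousMap.add_apply]
        rw [integral_add (FellerAux.integrable_cont κ₁ f) (FellerAux.integrable_cont κ₁ g),
          integral_add (FellerAux.integrable_cont κ₂ f) (FellerAux.integrable_cont κ₂ g)]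
        linarith
      | smul r f _ hf =>
        have hf : (∫ t, f t ∂κ₁) + m₂ * f z₀ = (∫ t, f t ∂κ₂) + m₁ * f z₀ := hf
        show (∫ t, (r • f) t ∂κ₁) + m₂ * (r • f) z₀ = (∫ t, (r • f) t ∂κ₂) + m₁ * (r • f) z₀
        simp only [ContinuousMap.smul_apply, smul_eq_mul]
        rw [integral_const_mul, integral_const_mul]
        linear_combination r * hf
    have hAV : (A : Set C(E, ℝ)) ⊆ V := by
      intro f hf
      exact hspanV f (by rw [← Algebra.adjoin_eq_span]; exact hf)
    intro f
    have hfA : f ∈ closure (A : Set C(E, ℝ)) := by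
      have : closure (A : Set C(E, ℝ)) = (A.topologicalClosure : Set C(E, ℝ)) := rfl
      rw [this, htop]
      trivial
    exact (closure_minimal hAV hVc) hfA
  -- deduce equality of pushforward measures plus point masses at z₀
  have hmain : κ₁ + (κ₂ Set.univ) • Measure.dirac z₀ = κ₂ + (κ₁ Set.univ) • Measure.dirac z₀ := by
    haveI : IsFiniteMeasure (κ₁ + (κ₂ Set.univ) • Measure.dirac z₀) := by
      refine ⟨?_⟩
      simp only [Measure.add_apply, Measure.smul_apply, smul_eq_mul]
      exact ENNReal.add_lt_top.mpr ⟨measure_lt_top _ _,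
        ENNReal.mul_lt_top (measure_lt_top _ _) (measure_lt_top _ _)⟩
    apply ext_of_forall_lintegral_eq_of_IsFiniteMeasure
    intro f
    set g : C(E, ℝ) := ⟨fun t => (f t : ℝ), by
      exact NNReal.continuous_coe.comp f.continuous⟩ with hg
    have hgnn : ∀ (κ : Measure E), 0 ≤ᵐ[κ] fun t => g t :=
      fun κ => Filter.Eventually.of_forall fun t => (f t).2
    have hlin : ∀ (κ : Measure E), IsFiniteMeasure κ →
        ∫⁻ t, (f t : ENNReal) ∂κ = ENNReal.ofReal (∫ t, g t ∂κ) := by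
      intro κ hκfin
      haveI := hκfin
      rw [ofReal_integral_eq_lintegral_ofReal (FellerAux.integrable_cont κ g) (hgnn κ)]
      congr 1
      funext t
      exact (ENNReal.ofReal_coe_nnreal).symm
    have hkey := key g
    rw [lintegral_add_measure, lintegral_add_measure, lintegral_smul_measure,
      lintegral_smul_measure, lintegral_dirac,
      hlin κ₁ inferInstance, hlin κ₂ inferInstance]
    have h1 : (κ₂ Set.univ) = ENNReal.ofReal m₂ := by
      rw [hm₂, ENNReal.ofReal_toReal (measure_ne_top _ _)]
    have h2 : (κ₁ Set.univ) = ENNReal.ofReal m₁ := by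
      rw [hm₁, ENNReal.ofReal_toReal (measure_ne_top _ _)]
    have h3 : (f z₀ : ENNReal) = ENNReal.ofReal (g z₀) := (ENNReal.ofReal_coe_nnreal).symm
    rw [h1, h2, h3]
    rw [smul_eq_mul, smul_eq_mul]
    rw [← ENNReal.ofReal_mul (by rw [hm₂]; exact ENNReal.toReal_nonneg)]
    rw [← ENNReal.ofReal_mul (by rw [hm₁]; exact ENNReal.toReal_nonneg)]
    rw [← ENNReal.ofReal_add (show (0:ℝ) ≤ ∫ t, g t ∂κ₁ from integral_nonneg fun t => (f t).2)
        (show (0:ℝ) ≤ m₂ * g z₀ from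
          mul_nonneg (by rw [hm₂]; exact ENNReal.toReal_nonneg) (f z₀).2)]
    rw [← ENNReal.ofReal_add (show (0:ℝ) ≤ ∫ t, g t ∂κ₂ from integral_nonneg fun t => (f t).2)
        (show (0:ℝ) ≤ m₁ * g z₀ from
          mul_nonneg (by rw [hm₁]; exact ENNReal.toReal_nonneg) (f z₀).2)]
    exact congrArg ENNReal.ofReal hkey
  -- κ₁ and κ₂ put no mass at z₀
  have hzmeas : ∀ (μ : Measure M), (μ.map Φ) {z₀} = 0 := by
    intro μ
    rw [Measure.map_apply hΦm (measurableSet_singleton _)]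
    have : Φ ⁻¹' {z₀} = ∅ := by
      ext x
      simp only [Set.mem_preimage, Set.mem_singleton_iff, Set.mem_empty_iff_false, iff_false]
      exact hz₀ x
    rw [this, measure_empty]
  -- total masses are equal
  have hmass : κ₁ Set.univ = κ₂ Set.univ := by
    have := congrArg (fun ν : Measure E => ν {z₀}) hmain
    simp only [Measure.add_apply, Measure.smul_apply, smul_eq_mul] at this
    rw [hκ₁, hκ₂] at this
    rw [hzmeas μ₁, hzmeas μ₂] at this
    rw [Measure.dirac_apply_of_mem (Set.mem_singleton z₀)] at this
    simpa using this.symm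
  -- hence κ₁ = κ₂
  have hκeq : κ₁ = κ₂ := by
    ext B hB
    have := congrArg (fun ν : Measure E => ν B) hmain
    simp only [Measure.add_apply, Measure.smul_apply, smul_eq_mul] at this
    rw [hmass] at this
    have hfin : κ₂ Set.univ * Measure.dirac z₀ B ≠ ⊤ :=
      ENNReal.mul_ne_top (measure_ne_top _ _) (measure_ne_top _ _)
    exact (ENNReal.add_left_inj hfin).mp this
  -- conclude
  ext A hA
  calc μ₁ A = μ₁ (Φ ⁻¹' (Φ '' A)) := by rw [hΦi.preimage_image A]
    _ = κ₁ (Φ '' A) := (hΦemb.map_apply μ₁ (Φ '' A)).symm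
    _ = κ₂ (Φ '' A) := by rw [hκeq]
    _ = μ₂ (Φ ⁻¹' (Φ '' A)) := hΦemb.map_apply μ₂ (Φ '' A)
    _ = μ₂ A := by rw [hΦi.preimage_image A]
end

section
/- Let (M, M̃) be a Feller topological monoid. If μ₁ and μ₂ are two Borel measures on M \ {e} such that for every χ ∈ M̃, ∫_{M\{e}} (1 − χ(x)) μ₁(dx) = ∫_{M\{e}} (1 − χ(x)) μ₂(dx) < +∞, then μ₁ = μ₂ on (M \ {e}, B(M \ {e})). -/
open Filter Topology MeasureTheory
open scoped NNReal ENNReal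

namespace FellerClass

section Basic

variable {M : Type*} [TopologicalSpace M] [CommMonoid M] [MeasurableSpace M]
  {S : Set (M → ℝ)}

/-- At every point some character is nonzero. -/
lemma exists_char_ne_zero (hS : FellerClass M S) (x : M) : ∃ χ ∈ S, χ x ≠ 0 := by
  by_contra hcon
  push_neg at hcon
  have h0 : ∀ χ ∈ S, Tendsto (fun _ : ℕ => χ x) atTop (𝓝 0) := fun χ hχ => by
    simpa [hcon χ hχ] using
      (tendsto_const_nhds : Tendsto (fun _ : ℕ => χ x) atTop (𝓝 (χ x)))
  have h1 := (hS.tendsto_zero_iff fun _ => x).1 h0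
  have h2 : ({x}ᶜ : Set M) ∈ cocompact M := isCompact_singleton.compl_mem_cocompact
  have h3 : ∀ᶠ _ : ℕ in atTop, x ∈ ({x}ᶜ : Set M) :=
    h1.eventually (eventually_of_mem h2 fun _ hy => hy)
  simpa using h3.exists

/-- The characters separate points. -/
lemma eq_of_forall_char_eq_s13 [T2Space M] (hS : FellerClass M S) {a b : M}
    (h : ∀ χ ∈ S, χ a = χ b) : a = b := by
  obtain ⟨χ₀, hχ₀, h0⟩ := hS.exists_char_ne_zero a
  have hconv : ∀ χ ∈ S,
      Tendsto (fun n : ℕ => χ (if Even n then a else b)) atTop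
        (𝓝 ((fun χ : M → ℝ => χ a) χ)) := by
    intro χ hχ
    have : (fun n : ℕ => χ (if Even n then a else b)) = fun _ => χ a := by
      funext n
      by_cases hn : Even n <;> simp [hn, h χ hχ]
    rw [this]
    exact tendsto_const_nhds
  obtain ⟨cpt, hcpt, hval⟩ :=
    hS.limit_exists (fun n : ℕ => if Even n then a else b) _ hconv ⟨χ₀, hχ₀, h0⟩
  have h2k : Tendsto (fun k : ℕ => 2 * k) atTop atTop :=
    tendsto_atTop_mono (fun k => by simp only [id_eq]; omega) tendsto_id
  have h2k1 : Tendsto (fun k : ℕ => 2 * k + 1) atTop atTop :=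
    tendsto_atTop_mono (fun k => by simp only [id_eq]; omega) tendsto_id
  have ha : a = cpt := by
    have h2 : Tendsto (fun k : ℕ => if Even (2 * k) then a else b) atTop (𝓝 cpt) :=
      hcpt.comp h2k
    have heq : (fun k : ℕ => if Even (2 * k) then a else b) = fun _ => a := by
      funext k; simp [even_two_mul k]
    rw [heq] at h2
    exact tendsto_nhds_unique tendsto_const_nhds h2
  have hb : b = cpt := by
    have h2 : Tendsto (fun k : ℕ => if Even (2 * k + 1) then a else b) atTop (𝓝 cpt) :=
      hcpt.comp h2k1
    have heq : (fun k : ℕ => if Even (2 * k + 1) then a else b) = fun _ => b := by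
      funext k
      have : ¬ Even (2 * k + 1) := by simp [Nat.even_add_one, even_two_mul k]
      simp [this]
    rw [heq] at h2
    exact tendsto_nhds_unique tendsto_const_nhds h2
  rw [ha, hb]

/-- Pointwise convergence of characters to values at a point implies convergence. -/
lemma tendsto_of_forall_char [T2Space M] (hS : FellerClass M S) (x : ℕ → M) (a : M)
    (h : ∀ χ ∈ S, Tendsto (fun n => χ (x n)) atTop (𝓝 (χ a))) :
    Tendsto x atTop (𝓝 a) := by
  obtain ⟨χ₀, hχ₀, h0⟩ := hS.exists_char_ne_zero a
  obtain ⟨cpt, hcpt, hval⟩ := hS.limit_exists x (fun χ => χ a) h ⟨χ₀, hχ₀, h0⟩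
  have : a = cpt := hS.eq_of_forall_char_eq_s13 fun χ hχ => hval χ hχ
  rwa [this]

end Basic

section Main

variable {M : Type*} [TopologicalSpace M] [CommMonoid M]
    [ContinuousMul M] [LocallyCompactSpace M] [SecondCountableTopology M] [T2Space M]
    [MeasurableSpace M] [BorelSpace M] {S : Set (M → ℝ)}

/-- Borel sets of `M` are preimages of Borel sets under the joint character map. -/
lemma exists_preimage (hS : FellerClass M S) {c : ℕ → M → ℝ}
    (hc' : ∀ χ ∈ S, ∃ n, c n = χ) (g : M → ℕ → Set.Icc (0 : ℝ) 1)
    (hg : ∀ n x, (g x n : ℝ) = c n x) {A : Set M} (hA : MeasurableSet A) :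
    ∃ B : Set (ℕ → Set.Icc (0 : ℝ) 1), MeasurableSet B ∧ g ⁻¹' B = A := by
  classical
  have hind : @Topology.IsInducing M (ℕ → Set.Icc (0 : ℝ) 1)
      (TopologicalSpace.induced g inferInstance) _ g :=
    @Topology.IsInducing.mk M (ℕ → Set.Icc (0 : ℝ) 1)
      (TopologicalSpace.induced g inferInstance) _ g rfl
  have hfu : @FrechetUrysohnSpace M (TopologicalSpace.induced g inferInstance) :=
    @Topology.IsInducing.frechetUrysohnSpace M (ℕ → Set.Icc (0 : ℝ) 1)
      (TopologicalSpace.induced g inferInstance) _ _ g hind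
  have hseq : @SequentialSpace M (TopologicalSpace.induced g inferInstance) :=
    @FrechetUrysohnSpace.to_sequentialSpace M (TopologicalSpace.induced g inferInstance) hfu
  have hcontid : @Continuous M M (TopologicalSpace.induced g inferInstance) _ id := by
    refine @SeqContinuous.continuous M M (TopologicalSpace.induced g inferInstance) _ hseq id ?_
    intro x a hx
    have hx' : Tendsto (fun n => g (x n)) atTop (𝓝 (g a)) := by
      rw [nhds_induced] at hx
      exact tendsto_comap_iff.mp hx
    have hcoord : ∀ χ ∈ S, Tendsto (fun n => χ (x n)) atTop (𝓝 (χ a)) := by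
      intro χ hχ
      obtain ⟨n, rfl⟩ := hc' χ hχ
      have h1 : Tendsto (fun k => g (x k) n) atTop (𝓝 (g a n)) := tendsto_pi_nhds.mp hx' n
      have h2 : Tendsto (fun k => (g (x k) n : ℝ)) atTop (𝓝 ((g a n : ℝ))) :=
        (continuous_subtype_val.tendsto _).comp h1
      simpa [hg] using h2
    exact hS.tendsto_of_forall_char x a hcoord
  have hle : (TopologicalSpace.induced g inferInstance : TopologicalSpace M) ≤
      (inferInstance : TopologicalSpace M) := continuous_id_iff_le.mp hcontid
  have hb : (inferInstance : MeasurableSpace M) = borel M := BorelSpace.measurable_eq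
  have hbΩ : (inferInstance : MeasurableSpace (ℕ → Set.Icc (0 : ℝ) 1)) = borel _ :=
    BorelSpace.measurable_eq
  have hle2 : (inferInstance : MeasurableSpace M) ≤ MeasurableSpace.comap g inferInstance := by
    rw [hb, hbΩ, ← borel_comap]
    exact MeasurableSpace.generateFrom_le fun s hs =>
      MeasurableSpace.measurableSet_generateFrom (hs.mono hle)
  exact MeasurableSpace.measurableSet_comap.mp (hle2 A hA)

/-- Two finite Borel measures with the same total mass and the same integrals of all
characters coincide. -/
lemma measure_eq_of_char (hS : FellerClass M S) {c : ℕ → M → ℝ} (hc : ∀ n, c n ∈ S)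
    (hc' : ∀ χ ∈ S, ∃ n, c n = χ)
    (ν₁ ν₂ : Measure M) [IsFiniteMeasure ν₁] [IsFiniteMeasure ν₂]
    (hmass : ν₁ Set.univ = ν₂ Set.univ)
    (hint : ∀ χ ∈ S, ∫⁻ x, ENNReal.ofReal (χ x) ∂ν₁ = ∫⁻ x, ENNReal.ofReal (χ x) ∂ν₂) :
    ν₁ = ν₂ := by
  classical
  set Ω := (ℕ → Set.Icc (0 : ℝ) 1) with hΩ
  set g : M → Ω := fun x n => ⟨c n x, hS.mem_Icc _ (hc n) x⟩ with hgdef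
  have hgcoord : ∀ n x, ((g x n : ℝ)) = c n x := fun n x => rfl
  have hgm : Measurable g := by
    refine measurable_pi_lambda _ fun n => ?_
    exact Measurable.subtype_mk (hS.measurable _ (hc n))
  set ρ₁ : Measure Ω := Measure.map g ν₁ with hρ₁
  set ρ₂ : Measure Ω := Measure.map g ν₂ with hρ₂
  haveI : IsFiniteMeasure ρ₁ := by rw [hρ₁]; infer_instance
  haveI : IsFiniteMeasure ρ₂ := by rw [hρ₂]; infer_instance
  -- real-integral form of the hypothesis
  have hreal : ∀ χ ∈ S, ∫ x, χ x ∂ν₁ = ∫ x, χ x ∂ν₂ := by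
    intro χ hχ
    have h₁ : ∀ ν : Measure M, ∫ x, χ x ∂ν = (∫⁻ x, ENNReal.ofReal (χ x) ∂ν).toReal := fun ν =>
      integral_eq_lintegral_of_nonneg_ae
        (Eventually.of_forall fun x => (hS.mem_Icc χ hχ x).1)
        (hS.measurable χ hχ).aestronglyMeasurable
    rw [h₁ ν₁, h₁ ν₂, hint χ hχ]
  -- the coordinate functions on Ω
  set coord : ℕ → C(Ω, ℝ) := fun n =>
    ⟨fun ω => (ω n : ℝ), continuous_subtype_val.comp (continuous_apply n)⟩ with hcoorddef
  have hIntg : ∀ (ρ : Measure Ω) [IsFiniteMeasure ρ] (f : C(Ω, ℝ)), Integrable f ρ := by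
    intro ρ _ f
    exact f.continuous.integrable_of_hasCompactSupport (HasCompactSupport.of_compactSpace _)
  -- continuity of integration against a finite measure
  have hcont : ∀ (ρ : Measure Ω) [IsFiniteMeasure ρ],
      Continuous fun f : C(Ω, ℝ) => ∫ x, f x ∂ρ := by
    intro ρ _
    refine (LipschitzWith.of_dist_le_mul (K := (ρ Set.univ).toNNReal)
      (fun f h => ?_)).continuous
    rw [Real.dist_eq, ← integral_sub (hIntg ρ f) (hIntg ρ h)]
    calc |∫ x, (f x - h x) ∂ρ|
        ≤ dist f h * (ρ Set.univ).toReal := by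
          rw [← Real.norm_eq_abs]
          refine norm_integral_le_of_norm_le_const (Eventually.of_forall fun x => ?_)
          rw [Real.norm_eq_abs, ← Real.dist_eq]
          exact ContinuousMap.dist_apply_le_dist x
      _ = (ρ Set.univ).toNNReal * dist f h := by rw [mul_comm]; rfl
  have hmap : ∀ (ν : Measure M) (f : C(Ω, ℝ)),
      ∫ y, f y ∂(Measure.map g ν) = ∫ x, f (g x) ∂ν := fun ν f =>
    integral_map hgm.aemeasurable f.continuous.aestronglyMeasurable
  -- integrals agree on monomials
  have hmono : ∀ f ∈ Submonoid.closure (Set.range coord),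
      ∫ y, (f : C(Ω, ℝ)) y ∂ρ₁ = ∫ y, (f : C(Ω, ℝ)) y ∂ρ₂ := by
    intro f hf
    have key : (∀ x : M, f (g x) = 1) ∨ ∃ χ ∈ S, ∀ x : M, f (g x) = χ x := by
      induction hf using Submonoid.closure_induction with
      | mem f hf =>
        obtain ⟨n, rfl⟩ := hf
        exact Or.inr ⟨c n, hc n, fun x => rfl⟩
      | one => exact Or.inl fun x => rfl
      | mul f₁ f₂ h₁ h₂ ih₁ ih₂ =>
        have happ : ∀ x : M, (f₁ * f₂) (g x) = f₁ (g x) * f₂ (g x) := fun x => rfl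
        rcases ih₁ with ih₁ | ⟨χ₁, hχ₁, hv₁⟩
        · rcases ih₂ with ih₂ | ⟨χ₂, hχ₂, hv₂⟩
          · exact Or.inl fun x => by rw [happ, ih₁ x, ih₂ x, one_mul]
          · exact Or.inr ⟨χ₂, hχ₂, fun x => by rw [happ, ih₁ x, one_mul, hv₂ x]⟩
        · rcases ih₂ with ih₂ | ⟨χ₂, hχ₂, hv₂⟩
          · exact Or.inr ⟨χ₁, hχ₁, fun x => by rw [happ, hv₁ x, ih₂ x, mul_one]⟩
          · exact Or.inr ⟨fun x => χ₁ x * χ₂ x, hS.mul_mem χ₁ hχ₁ χ₂ hχ₂,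
              fun x => by rw [happ, hv₁ x, hv₂ x]⟩
    rw [hρ₁, hρ₂, hmap ν₁ f, hmap ν₂ f]
    rcases key with hone | ⟨χ, hχ, hval⟩
    · simp only [hone, integral_const, smul_eq_mul, mul_one, measureReal_def, hmass]
    · simp only [hval]
      exact hreal χ hχ
  -- integrals agree on the linear span of the monomials
  have hspan : ∀ f ∈ Submodule.span ℝ ((Submonoid.closure (Set.range coord) : Submonoid C(Ω, ℝ)) :
      Set C(Ω, ℝ)), ∫ y, (f : C(Ω, ℝ)) y ∂ρ₁ = ∫ y, (f : C(Ω, ℝ)) y ∂ρ₂ := by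
    intro f hf
    induction hf using Submodule.span_induction with
    | mem f hf => exact hmono f hf
    | zero => simp
    | add f₁ f₂ _ _ ih₁ ih₂ =>
      have : ∀ ρ : Measure Ω, ∀ _ : IsFiniteMeasure ρ,
          ∫ y, (f₁ + f₂) y ∂ρ = ∫ y, f₁ y ∂ρ + ∫ y, f₂ y ∂ρ := by
        intro ρ hρ
        simp only [ContinuousMap.add_apply]
        exact integral_add (hIntg ρ f₁) (hIntg ρ f₂)
      rw [this ρ₁ inferInstance, this ρ₂ inferInstance, ih₁, ih₂]
    | smul r f _ ih =>
      simp only [ContinuousMap.smul_apply, smul_eq_mul, integral_const_mul, ih]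
  -- integrals agree on all continuous functions, by Stone-Weierstrass
  have hall : ∀ f : C(Ω, ℝ), ∫ y, f y ∂ρ₁ = ∫ y, f y ∂ρ₂ := by
    intro f
    set A : Subalgebra ℝ C(Ω, ℝ) := Algebra.adjoin ℝ (Set.range coord) with hAdef
    have hsep : A.SeparatesPoints := by
      intro x y hxy
      have hex : ∃ n, x n ≠ y n := by
        by_contra hcon
        push_neg at hcon
        exact hxy (funext hcon)
      obtain ⟨n, hn⟩ := hex
      refine ⟨coord n, ⟨coord n, Algebra.subset_adjoin ⟨n, rfl⟩, rfl⟩, ?_⟩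
      intro hval
      exact hn (Subtype.ext hval)
    have hA : A.topologicalClosure = ⊤ :=
      ContinuousMap.subalgebra_topologicalClosure_eq_top_of_separatesPoints A hsep
    have hT : IsClosed {f : C(Ω, ℝ) | ∫ y, f y ∂ρ₁ = ∫ y, f y ∂ρ₂} :=
      isClosed_eq (hcont ρ₁) (hcont ρ₂)
    have hsub : (A : Set C(Ω, ℝ)) ⊆ {f : C(Ω, ℝ) | ∫ y, f y ∂ρ₁ = ∫ y, f y ∂ρ₂} := by
      intro f hf
      refine hspan f ?_
      rw [← Algebra.adjoin_eq_span]
      exact (Subalgebra.mem_toSubmodule A).mpr hf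
    have hfc : f ∈ closure (A : Set C(Ω, ℝ)) := by
      have : f ∈ (A.topologicalClosure : Set C(Ω, ℝ)) := by rw [hA]; trivial
      rwa [Subalgebra.topologicalClosure_coe] at this
    exact hT.closure_subset_iff.mpr hsub hfc
  -- hence the pushforward measures agree
  have hρ : ρ₁ = ρ₂ := by
    apply ext_of_forall_lintegral_eq_of_IsFiniteMeasure
    intro f
    have hfc : Continuous fun x : Ω => ((f x : ℝ≥0) : ℝ) :=
      NNReal.continuous_coe.comp f.continuous
    have hI₁ : Integrable (fun x => ((f x : ℝ≥0) : ℝ)) ρ₁ := hIntg ρ₁ ⟨_, hfc⟩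
    have hI₂ : Integrable (fun x => ((f x : ℝ≥0) : ℝ)) ρ₂ := hIntg ρ₂ ⟨_, hfc⟩
    rw [lintegral_coe_eq_integral _ hI₁, lintegral_coe_eq_integral _ hI₂]
    exact congrArg ENNReal.ofReal (hall ⟨fun x => ((f x : ℝ≥0) : ℝ), hfc⟩)
  -- transfer back through the character map
  ext A hA
  obtain ⟨B, hB, hpre⟩ := hS.exists_preimage hc' g hgcoord hA
  rw [← hpre, ← Measure.map_apply hgm hB, ← Measure.map_apply hgm hB]
  rw [hρ₁, hρ₂] at hρ
  rw [hρ]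

end Main

end FellerClass

/-- if two Borel measures on `M \ {e}` (formalized as measures on
`M` restricted to the complement of `{e}`) satisfy
`∫_{M\{e}} (1 - χ) dμ₁ = ∫_{M\{e}} (1 - χ) dμ₂ < ∞` for every character `χ` in
the determining class, then they coincide on `M \ {e}`. -/
theorem FellerClass.levy_measure_injective {M : Type*} [TopologicalSpace M] [CommMonoid M]
    [ContinuousMul M] [LocallyCompactSpace M] [SecondCountableTopology M] [T2Space M]
    [MeasurableSpace M] [BorelSpace M]
    {S : Set (M → ℝ)} (hS : FellerClass M S)
    (μ₁ μ₂ : Measure M)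
    (h : ∀ χ ∈ S,
      ∫⁻ x in {(1 : M)}ᶜ, ENNReal.ofReal (1 - χ x) ∂μ₁ =
        ∫⁻ x in {(1 : M)}ᶜ, ENNReal.ofReal (1 - χ x) ∂μ₂)
    (hfin : ∀ χ ∈ S, ∫⁻ x in {(1 : M)}ᶜ, ENNReal.ofReal (1 - χ x) ∂μ₁ < ⊤) :
    μ₁.restrict {(1 : M)}ᶜ = μ₂.restrict {(1 : M)}ᶜ := by
  classical
  obtain ⟨c, hcS⟩ := hS.countable.exists_eq_range hS.nonempty
  have hc : ∀ n, c n ∈ S := fun n => hcS ▸ Set.mem_range_self n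
  have hc' : ∀ χ ∈ S, ∃ n, c n = χ := by
    intro χ hχ
    rw [hcS] at hχ
    exact hχ
  set ρ₁ : Measure M := μ₁.restrict {(1 : M)}ᶜ with hρ₁def
  set ρ₂ : Measure M := μ₂.restrict {(1 : M)}ᶜ with hρ₂def
  -- for each character χ, the measures with density (1 - χ) agree
  have hkey : ∀ χ ∈ S,
      ρ₁.restrict {x | ENNReal.ofReal (1 - χ x) ≠ 0} =
        ρ₂.restrict {x | ENNReal.ofReal (1 - χ x) ≠ 0} := by
    intro χ hχ
    set w : M → ℝ≥0∞ := fun x => ENNReal.ofReal (1 - χ x) with hwdef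
    have hw : Measurable w := (measurable_const.sub (hS.measurable χ hχ)).ennreal_ofReal
    have hfin₁ : ∫⁻ x, w x ∂ρ₁ < ⊤ := hfin χ hχ
    have hfin₂ : ∫⁻ x, w x ∂ρ₂ < ⊤ := by rw [← h χ hχ]; exact hfin χ hχ
    set ν₁ : Measure M := ρ₁.withDensity w with hν₁def
    set ν₂ : Measure M := ρ₂.withDensity w with hν₂def
    haveI : IsFiniteMeasure ν₁ := isFiniteMeasure_withDensity hfin₁.ne
    haveI : IsFiniteMeasure ν₂ := isFiniteMeasure_withDensity hfin₂.ne
    have hmass : ν₁ Set.univ = ν₂ Set.univ := by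
      rw [hν₁def, hν₂def, withDensity_apply _ MeasurableSet.univ,
        withDensity_apply _ MeasurableSet.univ, Measure.restrict_univ, Measure.restrict_univ]
      exact h χ hχ
    have hint : ∀ χ' ∈ S,
        ∫⁻ x, ENNReal.ofReal (χ' x) ∂ν₁ = ∫⁻ x, ENNReal.ofReal (χ' x) ∂ν₂ := by
      intro χ' hχ'
      have hχ'm : Measurable fun x => ENNReal.ofReal (χ' x) :=
        (hS.measurable χ' hχ').ennreal_ofReal
      have hrw : ∀ ρ : Measure M,
          ∫⁻ x, ENNReal.ofReal (χ' x) ∂(ρ.withDensity w) =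
            ∫⁻ x, ENNReal.ofReal ((1 - χ x) * χ' x) ∂ρ := by
        intro ρ
        rw [lintegral_withDensity_eq_lintegral_mul ρ hw hχ'm]
        refine lintegral_congr fun x => ?_
        simp only [Pi.mul_apply, hwdef]
        rw [← ENNReal.ofReal_mul (sub_nonneg.mpr (hS.mem_Icc χ hχ x).2)]
      rw [hν₁def, hν₂def, hrw ρ₁, hrw ρ₂]
      -- (1 - χ)χ' + (1 - χ') = 1 - χχ'
      have hdecomp : ∀ ρ : Measure M,
          ∫⁻ x, ENNReal.ofReal ((1 - χ x) * χ' x) ∂ρ +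
              ∫⁻ x, ENNReal.ofReal (1 - χ' x) ∂ρ =
            ∫⁻ x, ENNReal.ofReal (1 - (fun y => χ y * χ' y) x) ∂ρ := by
        intro ρ
        have hm₁ : Measurable fun x => ENNReal.ofReal ((1 - χ x) * χ' x) :=
          ((measurable_const.sub (hS.measurable χ hχ)).mul (hS.measurable χ' hχ')).ennreal_ofReal
        rw [← lintegral_add_left hm₁]
        refine lintegral_congr fun x => ?_
        rw [← ENNReal.ofReal_add
          (mul_nonneg (sub_nonneg.mpr (hS.mem_Icc χ hχ x).2) (hS.mem_Icc χ' hχ' x).1)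
          (sub_nonneg.mpr (hS.mem_Icc χ' hχ' x).2)]
        ring_nf
      have e₁ := hdecomp ρ₁
      have e₂ := hdecomp ρ₂
      have hR : ∫⁻ x, ENNReal.ofReal (1 - (fun y => χ y * χ' y) x) ∂ρ₁ =
          ∫⁻ x, ENNReal.ofReal (1 - (fun y => χ y * χ' y) x) ∂ρ₂ :=
        h _ (hS.mul_mem χ hχ χ' hχ')
      have hC : ∫⁻ x, ENNReal.ofReal (1 - χ' x) ∂ρ₁ =
          ∫⁻ x, ENNReal.ofReal (1 - χ' x) ∂ρ₂ := h χ' hχ'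
      have hCfin : ∫⁻ x, ENNReal.ofReal (1 - χ' x) ∂ρ₂ ≠ ⊤ := by
        rw [← hC]; exact (hfin χ' hχ').ne
      have : ∫⁻ x, ENNReal.ofReal ((1 - χ x) * χ' x) ∂ρ₁ +
          ∫⁻ x, ENNReal.ofReal (1 - χ' x) ∂ρ₂ =
          ∫⁻ x, ENNReal.ofReal ((1 - χ x) * χ' x) ∂ρ₂ +
          ∫⁻ x, ENNReal.ofReal (1 - χ' x) ∂ρ₂ := by
        rw [← hC, e₁, hR, ← e₂, hC]
      exact (ENNReal.add_left_inj hCfin).mp this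
    have hν : ν₁ = ν₂ := hS.measure_eq_of_char hc hc' ν₁ ν₂ hmass hint
    -- invert the density on the set where it is nonzero
    have hwne : ∀ x, w x ≠ ⊤ := fun x => ENNReal.ofReal_ne_top
    have hmeasset : MeasurableSet {x | w x ≠ 0} := (hw (measurableSet_singleton 0)).compl
    have hinv : ∀ ρ : Measure M,
        (ρ.withDensity w).withDensity (fun x => (w x)⁻¹) = ρ.restrict {x | w x ≠ 0} := by
      intro ρ
      rw [show (fun x => (w x)⁻¹) = w⁻¹ from rfl, ← withDensity_mul ρ hw hw.inv]
      have heq : (w * fun x => (w x)⁻¹) = Set.indicator {x | w x ≠ 0} 1 := by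
        funext x
        by_cases hx : w x = 0
        · simp [Pi.mul_apply, hx, Set.indicator_of_notMem (by simp [hx] : x ∉ {x | w x ≠ 0})]
        · rw [Pi.mul_apply, ENNReal.mul_inv_cancel hx (hwne x),
            Set.indicator_of_mem (by exact hx : x ∈ {x | w x ≠ 0})]
          rfl
      rw [show w * w⁻¹ = Set.indicator {x | w x ≠ 0} 1 from heq, withDensity_indicator_one hmeasset]
    calc ρ₁.restrict {x | w x ≠ 0} = (ρ₁.withDensity w).withDensity (fun x => (w x)⁻¹) :=
          (hinv ρ₁).symm
      _ = (ρ₂.withDensity w).withDensity (fun x => (w x)⁻¹) := by rw [← hν₁def, ← hν₂def, hν]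
      _ = ρ₂.restrict {x | w x ≠ 0} := hinv ρ₂
  -- the sets where some character is < 1 cover the complement of the unit
  set u : ℕ → Set M := fun n => {x | ENNReal.ofReal (1 - c n x) ≠ 0} with hudef
  have humeas : ∀ n, MeasurableSet (u n) :=
    fun n => (((measurable_const.sub (hS.measurable _ (hc n))).ennreal_ofReal)
      (measurableSet_singleton 0)).compl
  have hres : ∀ n, ρ₁.restrict (u n) = ρ₂.restrict (u n) := fun n => hkey (c n) (hc n)
  have hUnion : ρ₁.restrict (⋃ n, u n) = ρ₂.restrict (⋃ n, u n) :=
    Measure.restrict_iUnion_congr.mpr hres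
  have hcover : ({(1 : M)}ᶜ : Set M) ⊆ ⋃ n, u n := by
    intro x hx
    have hx1 : x ≠ 1 := hx
    have hex : ∃ χ ∈ S, χ x ≠ 1 := by
      by_contra hcon
      push_neg at hcon
      refine hx1 (hS.eq_of_forall_char_eq_s13 fun χ hχ => ?_)
      rw [hcon χ hχ, hS.map_one χ hχ]
    obtain ⟨χ, hχ, hne⟩ := hex
    obtain ⟨n, rfl⟩ := hc' χ hχ
    refine Set.mem_iUnion.mpr ⟨n, ?_⟩
    have hlt : c n x < 1 := lt_of_le_of_ne (hS.mem_Icc _ (hc n) x).2 hne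
    exact (ENNReal.ofReal_pos.mpr (by linarith)).ne'
  have hfull : ∀ μ : Measure M,
      (μ.restrict {(1 : M)}ᶜ).restrict (⋃ n, u n) = μ.restrict {(1 : M)}ᶜ := by
    intro μ
    rw [Measure.restrict_restrict (MeasurableSet.iUnion humeas),
      Set.inter_eq_self_of_subset_right hcover]
  calc μ₁.restrict {(1 : M)}ᶜ = ρ₁.restrict (⋃ n, u n) := (hfull μ₁).symm
    _ = ρ₂.restrict (⋃ n, u n) := hUnion
    _ = μ₂.restrict {(1 : M)}ᶜ := hfull μ₂
end

section
/- (Bochner subordination) Let (X_t)_{t≥0} be a subordinator on a Feller topological monoid (M, M̃) with Laplace exponent Ψ, and let (σ_t)_{t≥0} be a classical additive subordinator, independent of (X_t)_{t≥0}, with Laplace exponent Φ. Then the process (Y_t)_{t≥0} defined by Y_t = X_{σ_t} is a subordinator on (M, M̃) and its Laplace exponent is Φ ∘ Ψ; in particular E[χ(Y_t)] = exp(−t Φ(Ψ(χ))) for all t ≥ 0 and χ ∈ M̃. -/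
open Filter Topology MeasureTheory

open scoped NNReal ENNReal

/-- A subordinator on a topological monoid `M`, defined on the probability
space `(Ω, P)`: it starts at the neutral element, has right-continuous paths,
and its increments are independent and stationary in the distributional sense:
the law of `X_{s+t}` is the `⊕`-convolution of the laws of `X_s` and `X_t`
(equivalently, `X_{s+t}` is distributed as `X_s^{(t)} ⊕ X_t` with `X_s^{(t)}`
an independent copy of `X_s`, possibly on an enlarged probability space). -/
structure IsSubordinator {M : Type*} [TopologicalSpace M] [CommMonoid M]
    [MeasurableSpace M] {Ω : Type*} [MeasurableSpace Ω] (P : Measure Ω)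
    (X : ℝ≥0 → Ω → M) : Prop where
  measurable : ∀ t, Measurable (X t)
  init : ∀ ω, X 0 ω = 1
  rightCont : ∀ ω, ∀ t : ℝ≥0, Tendsto (fun s => X s ω) (𝓝[≥] t) (𝓝 (X t ω))
  increments : ∀ s t : ℝ≥0,
    P.map (X (s + t)) =
      Measure.map (fun p : M × M => p.1 * p.2) ((P.map (X s)).prod (P.map (X t)))

/-- A classical additive subordinator: a `[0,∞)`-valued process starting at `0`
with right-continuous nondecreasing paths and stationary independent increments
(stated distributionally: the law of `σ_{s+t}` is the additive convolution of
the laws of `σ_s` and `σ_t`). -/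
structure IsAddSubordinator {Ω : Type*} [MeasurableSpace Ω] (P : Measure Ω)
    (σ : ℝ≥0 → Ω → ℝ≥0) : Prop where
  measurable : ∀ t, Measurable (σ t)
  init : ∀ ω, σ 0 ω = 0
  mono : ∀ ω, Monotone fun t => σ t ω
  rightCont : ∀ ω, ∀ t : ℝ≥0, Tendsto (fun s => σ s ω) (𝓝[≥] t) (𝓝 (σ t ω))
  increments : ∀ s t : ℝ≥0,
    P.map (σ (s + t)) =
      Measure.map (fun p : ℝ≥0 × ℝ≥0 => p.1 + p.2) ((P.map (σ s)).prod (P.map (σ t)))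


section BochnerAux

open ProbabilityTheory

/-! ### Dyadic upper approximation of a nonnegative real time -/

noncomputable def dyadicUp (n : ℕ) (u : ℝ≥0) : ℝ≥0 := (⌈u * 2 ^ n⌉₊ : ℝ≥0) / 2 ^ n

lemma le_dyadicUp (n : ℕ) (u : ℝ≥0) : u ≤ dyadicUp n u := by
  rw [dyadicUp, le_div_iff₀ (by positivity)]
  exact Nat.le_ceil _

lemma dyadicUp_le (n : ℕ) (u : ℝ≥0) : dyadicUp n u ≤ u + (1 / 2) ^ n := by
  rw [dyadicUp, div_le_iff₀ (by positivity)]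
  have h1 : (u + (1 / 2) ^ n) * 2 ^ n = u * 2 ^ n + 1 := by
    rw [add_mul, ← mul_pow]; norm_num
  rw [h1]
  exact (Nat.ceil_lt_add_one (by positivity)).le

lemma tendsto_dyadicUp (u : ℝ≥0) :
    Tendsto (fun n => dyadicUp n u) atTop (𝓝[≥] u) := by
  rw [tendsto_nhdsWithin_iff]
  constructor
  · have hup : Tendsto (fun n : ℕ => u + (1 / 2 : ℝ≥0) ^ n) atTop (𝓝 u) := by
      simpa using tendsto_const_nhds.add
        (NNReal.tendsto_pow_atTop_nhds_zero_of_lt_one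
          (show (1/2 : ℝ≥0) < 1 by rw [one_div]; exact two_inv_lt_one))
    exact tendsto_of_tendsto_of_tendsto_of_le_of_le tendsto_const_nhds hup
      (fun n => le_dyadicUp n u) (fun n => dyadicUp_le n u)
  · exact Eventually.of_forall fun n => le_dyadicUp n u

lemma measurable_dyadicUp (n : ℕ) : Measurable (dyadicUp n) := by
  have h : dyadicUp n = (fun k : ℕ => (k : ℝ≥0) / 2 ^ n) ∘ (fun u => ⌈u * 2 ^ n⌉₊) := rfl
  rw [h]
  exact measurable_from_top.comp (Nat.measurable_ceil.comp (measurable_id.mul_const (2 ^ n)))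

/-! ### Measurability of a right-continuous process at a random time -/

section Meas
variable {M : Type*} [TopologicalSpace M] [TopologicalSpace.PseudoMetrizableSpace M]
  [MeasurableSpace M] [BorelSpace M]
  {Ω : Type*} [MeasurableSpace Ω]

omit [TopologicalSpace.PseudoMetrizableSpace M] [BorelSpace M] in
lemma measurable_dyadic_comp (X : ℝ≥0 → Ω → M) (hXm : ∀ t, Measurable (X t)) (n : ℕ) :
    Measurable (fun p : ℝ≥0 × Ω => X (dyadicUp n p.1) p.2) := by
  have hg : Measurable (fun q : Ω × ℕ => X ((q.2 : ℝ≥0) / 2 ^ n) q.1) :=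
    measurable_from_prod_countable_left fun k => hXm ((k : ℝ≥0) / 2 ^ n)
  have h : (fun p : ℝ≥0 × Ω => X (dyadicUp n p.1) p.2)
      = fun p : ℝ≥0 × Ω => (fun q : Ω × ℕ => X ((q.2 : ℝ≥0) / 2 ^ n) q.1)
        (p.2, ⌈p.1 * 2 ^ n⌉₊) := rfl
  rw [h]
  exact hg.comp (measurable_snd.prodMk (Nat.measurable_ceil.comp (measurable_fst.mul_const _)))

lemma measurable_uncurry_of_rightCont (X : ℝ≥0 → Ω → M) (hXm : ∀ t, Measurable (X t))
    (hXr : ∀ ω, ∀ t : ℝ≥0, Tendsto (fun s => X s ω) (𝓝[≥] t) (𝓝 (X t ω))) :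
    Measurable (fun p : ℝ≥0 × Ω => X p.1 p.2) := by
  apply measurable_of_tendsto_metrizable' atTop (fun n => measurable_dyadic_comp X hXm n)
  rw [tendsto_pi_nhds]
  exact fun p => (hXr p.2 p.1).comp (tendsto_dyadicUp p.1)

lemma measurable_rand_time (X : ℝ≥0 → Ω → M) (hXm : ∀ t, Measurable (X t))
    (hXr : ∀ ω, ∀ t : ℝ≥0, Tendsto (fun s => X s ω) (𝓝[≥] t) (𝓝 (X t ω)))
    {τ : Ω → ℝ≥0} (hτ : Measurable τ) :
    Measurable (fun ω => X (τ ω) ω) :=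
  (measurable_uncurry_of_rightCont X hXm hXr).comp (hτ.prodMk measurable_id)

end Meas

/-! ### Generic integrability and bounds -/

lemma integrable_of_abs_bound {α : Type*} [MeasurableSpace α] {μ : Measure α}
    [IsFiniteMeasure μ] {h : α → ℝ} (hm : AEStronglyMeasurable h μ) {C : ℝ}
    (hb : ∀ x, |h x| ≤ C) : Integrable h μ :=
  (integrable_const C).mono' hm (Eventually.of_forall fun ω => by
    simpa [Real.norm_eq_abs] using hb ω)

lemma abs_integral_le_of_bound {α : Type*} [MeasurableSpace α] {μ : Measure α}
    [IsProbabilityMeasure μ] {h : α → ℝ} {C : ℝ} (hb : ∀ x, |h x| ≤ C) :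
    |∫ x, h x ∂μ| ≤ C := by
  rw [← Real.norm_eq_abs]
  calc ‖∫ x, h x ∂μ‖ ≤ C * (μ Set.univ).toReal := norm_integral_le_of_norm_le_const
        (Eventually.of_forall fun x => by simpa [Real.norm_eq_abs] using hb x)
  _ = C := by simp

/-! ### Continuity of characters in a Feller class -/

lemma FellerClass.continuous_char {M : Type*} [TopologicalSpace M] [CommMonoid M]
    [MeasurableSpace M] [LocallyCompactSpace M] [SecondCountableTopology M] [T2Space M]
    {S : Set (M → ℝ)} (hS : FellerClass M S) {χ : M → ℝ} (hχ : χ ∈ S) : Continuous χ := by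
  classical
  rw [continuous_iff_seqContinuous]
  intro x a hx
  apply tendsto_of_subseq_tendsto
  intro ns hns
  haveI : Countable S := hS.countable.to_subtype
  set g : ℕ → (S → Set.Icc (0:ℝ) 1) :=
    fun m χ' => ⟨χ'.1 (x (ns m)), hS.mem_Icc χ'.1 χ'.2 _⟩ with hg
  obtain ⟨L, φ, hφ, hL⟩ := CompactSpace.tendsto_subseq g
  set ψ : (M → ℝ) → ℝ := fun χ' => if h : χ' ∈ S then (L ⟨χ', h⟩ : ℝ) else 0 with hψ
  have hconv : ∀ χ' ∈ S, Tendsto (fun m => χ' (x (ns (φ m)))) atTop (𝓝 (ψ χ')) := by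
    intro χ' h
    have h1 : Tendsto (fun m => g (φ m) ⟨χ', h⟩) atTop (𝓝 (L ⟨χ', h⟩)) :=
      (tendsto_pi_nhds.mp hL) ⟨χ', h⟩
    have h2 := (continuous_subtype_val.tendsto _).comp h1
    simpa [hψ, dif_pos h, hg, Function.comp_def] using h2
  have hsub : Tendsto (fun m => x (ns (φ m))) atTop (𝓝 a) :=
    hx.comp (hns.comp hφ.tendsto_atTop)
  by_cases hzero : ∃ χ' ∈ S, ψ χ' ≠ 0
  · obtain ⟨a', ha', hval⟩ := hS.limit_exists _ ψ hconv hzero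
    have haa : a' = a := tendsto_nhds_unique ha' hsub
    refine ⟨φ, ?_⟩
    have h3 := hconv χ hχ
    rw [hval χ hχ, haa] at h3
    exact h3
  · exfalso
    push_neg at hzero
    have hco : Tendsto (fun m => x (ns (φ m))) atTop (cocompact M) :=
      (hS.tendsto_zero_iff _).mp (fun χ' h => by simpa [hzero χ' h] using hconv χ' h)
    obtain ⟨K, hKc, hKn⟩ := exists_compact_mem_nhds a
    have h1 : ∀ᶠ m in atTop, x (ns (φ m)) ∈ K := hsub hKn
    have h2 : ∀ᶠ m in atTop, x (ns (φ m)) ∈ Kᶜ := hco hKc.compl_mem_cocompact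
    obtain ⟨m, hm1, hm2⟩ := (h1.and h2).exists
    exact hm2 hm1

/-! ### The key conditioning identity -/

section KE
variable {M : Type*} [TopologicalSpace M] [TopologicalSpace.PseudoMetrizableSpace M]
  [MeasurableSpace M] [BorelSpace M]
  {Ω : Type*} [MeasurableSpace Ω] {P : Measure Ω} [IsProbabilityMeasure P]

lemma key_exchange (X : ℝ≥0 → Ω → M) (hXm : ∀ t, Measurable (X t))
    (hXr : ∀ ω, ∀ t : ℝ≥0, Tendsto (fun s => X s ω) (𝓝[≥] t) (𝓝 (X t ω)))
    {σt : Ω → ℝ≥0} (hσt : Measurable σt)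
    (hind : ∀ q : ℝ≥0, IndepFun (fun ω => X q ω) σt P)
    {f : M → ℝ} (hf : Continuous f) {C : ℝ} (hfb : ∀ x, |f x| ≤ C) :
    ∫ ω, f (X (σt ω) ω) ∂P = ∫ ω', (∫ ω, f (X (σt ω') ω) ∂P) ∂P := by
  set F : ℝ≥0 → ℝ := fun u => ∫ ω, f (X u ω) ∂P with hF
  have hFb : ∀ u, |F u| ≤ C := fun u => abs_integral_le_of_bound (fun ω => hfb _)
  have hYn : ∀ n : ℕ, Measurable fun ω => X (dyadicUp n (σt ω)) ω := fun n =>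
    measurable_rand_time X hXm hXr ((measurable_dyadicUp n).comp hσt)
  have main : ∀ n : ℕ,
      ∫ ω, f (X (dyadicUp n (σt ω)) ω) ∂P = ∫ ω, F (dyadicUp n (σt ω)) ∂P := by
    intro n
    set N : Ω → ℕ := fun ω => ⌈σt ω * 2 ^ n⌉₊ with hN
    have hNm : Measurable N := Nat.measurable_ceil.comp (hσt.mul_const _)
    set c : ℕ → ℝ≥0 := fun k => (k : ℝ≥0) / 2 ^ n with hc
    set s : ℕ → Set Ω := fun k => N ⁻¹' {k} with hs
    have hsm : ∀ k, MeasurableSet (s k) := fun k => hNm (measurableSet_singleton k)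
    have hsd : Pairwise (Function.onFun Disjoint s) := by
      intro i j hij
      simp only [Function.onFun, hs]
      rw [Set.disjoint_left]
      rintro ω hi hj
      exact hij ((Set.mem_preimage.mp hi).symm.trans (Set.mem_preimage.mp hj))
    have hsU : (⋃ k, s k) = Set.univ := by
      ext ω; simp [hs]
    have hrep : ∀ ω, dyadicUp n (σt ω) = c (N ω) := fun ω => rfl
    have hI1 : Integrable (fun ω => f (X (dyadicUp n (σt ω)) ω)) P :=
      integrable_of_abs_bound (hf.measurable.comp (hYn n)).aestronglyMeasurable
        (fun ω => hfb _)
    have hI2 : Integrable (fun ω => F (c (N ω))) P :=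
      integrable_of_abs_bound
        ((measurable_from_top (f := fun k : ℕ => F (c k))).comp hNm).aestronglyMeasurable
        (fun ω => hFb _)
    have e1 : ∫ ω, f (X (dyadicUp n (σt ω)) ω) ∂P
        = ∑' k, ∫ ω in s k, f (X (c (N ω)) ω) ∂P := by
      rw [← setIntegral_univ, ← hsU, integral_iUnion hsm hsd hI1.integrableOn]
      rfl
    have e2 : ∀ k, ∫ ω in s k, f (X (c (N ω)) ω) ∂P = ∫ ω in s k, f (X (c k) ω) ∂P :=
      fun k => setIntegral_congr_fun (hsm k)
        (fun ω hω => by rw [Set.mem_preimage.mp hω])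
    have e3 : ∀ k, ∫ ω in s k, f (X (c k) ω) ∂P = (P (s k)).toReal * F (c k) := by
      intro k
      set A : Set ℝ≥0 := (fun u : ℝ≥0 => ⌈u * 2 ^ n⌉₊) ⁻¹' {k} with hA
      have hAm : MeasurableSet A :=
        (Nat.measurable_ceil.comp (measurable_id.mul_const _)) (measurableSet_singleton k)
      have hmemA : ∀ ω, (ω ∈ s k ↔ σt ω ∈ A) := fun ω => Iff.rfl
      have hind2 : IndepFun (fun ω => f (X (c k) ω))
          (fun ω => A.indicator (fun _ => (1:ℝ)) (σt ω)) P :=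
        (hind (c k)).comp hf.measurable (measurable_const.indicator hAm)
      have hmul := hind2.integral_mul_eq_mul_integral
        (hf.measurable.comp (hXm (c k))).aestronglyMeasurable
        (((measurable_const.indicator hAm).comp hσt).aestronglyMeasurable)
      have key1 : (fun ω => f (X (c k) ω)) * (fun ω => A.indicator (fun _ => (1:ℝ)) (σt ω))
          = (s k).indicator (fun ω => f (X (c k) ω)) := by
        funext ω
        by_cases h : ω ∈ s k
        · have h' : σt ω ∈ A := (hmemA ω).mp h
          simp [Set.indicator_of_mem, h, h']
        · have h' : σt ω ∉ A := fun hh => h ((hmemA ω).mpr hh)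
          simp [Set.indicator_of_notMem, h, h']
      have key2 : (fun ω => A.indicator (fun _ => (1:ℝ)) (σt ω))
          = (s k).indicator (fun _ => (1:ℝ)) := by
        funext ω
        by_cases h : ω ∈ s k
        · have h' : σt ω ∈ A := (hmemA ω).mp h
          simp [Set.indicator_of_mem, h, h']
        · have h' : σt ω ∉ A := fun hh => h ((hmemA ω).mpr hh)
          simp [Set.indicator_of_notMem, h, h']
      rw [key1] at hmul
      rw [key2] at hmul
      rw [← integral_indicator (hsm k), hmul, integral_indicator_const _ (hsm k)]
      simp [mul_comm, measureReal_def]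
      exact Or.inl rfl
    have e4 : ∫ ω, F (dyadicUp n (σt ω)) ∂P = ∑' k, ∫ ω in s k, F (c (N ω)) ∂P := by
      simp_rw [hrep]
      rw [← setIntegral_univ, ← hsU, integral_iUnion hsm hsd hI2.integrableOn]
    have e5 : ∀ k, ∫ ω in s k, F (c (N ω)) ∂P = (P (s k)).toReal * F (c k) := by
      intro k
      rw [setIntegral_congr_fun (hsm k) (fun ω hω => by rw [Set.mem_preimage.mp hω]),
        setIntegral_const]
      simp [smul_eq_mul, measureReal_def]
    rw [e1, e4]
    exact tsum_congr fun k => by rw [e2 k, e3 k, e5 k]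
  have lim1 : Tendsto (fun n => ∫ ω, f (X (dyadicUp n (σt ω)) ω) ∂P) atTop
      (𝓝 (∫ ω, f (X (σt ω) ω) ∂P)) := by
    apply tendsto_integral_of_dominated_convergence (fun _ => C)
    · exact fun n => (hf.measurable.comp (hYn n)).aestronglyMeasurable
    · exact integrable_const C
    · exact fun n => Eventually.of_forall fun ω => by
        simpa [Real.norm_eq_abs] using hfb _
    · exact Eventually.of_forall fun ω =>
        (hf.tendsto _).comp ((hXr ω (σt ω)).comp (tendsto_dyadicUp (σt ω)))
  have hFlim : ∀ u : ℝ≥0, Tendsto (fun n => F (dyadicUp n u)) atTop (𝓝 (F u)) := by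
    intro u
    apply tendsto_integral_of_dominated_convergence (fun _ => C)
    · exact fun n => (hf.measurable.comp (hXm _)).aestronglyMeasurable
    · exact integrable_const C
    · exact fun n => Eventually.of_forall fun ω => by
        simpa [Real.norm_eq_abs] using hfb _
    · exact Eventually.of_forall fun ω =>
        (hf.tendsto _).comp ((hXr ω u).comp (tendsto_dyadicUp u))
  have lim2 : Tendsto (fun n => ∫ ω, F (dyadicUp n (σt ω)) ∂P) atTop
      (𝓝 (∫ ω', F (σt ω') ∂P)) := by
    apply tendsto_integral_of_dominated_convergence (fun _ => C)
    · intro n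
      exact (((measurable_from_top (f := fun k : ℕ => F ((k : ℝ≥0) / 2 ^ n))).comp
        (Nat.measurable_ceil.comp (hσt.mul_const _))).aestronglyMeasurable :
          AEStronglyMeasurable (fun ω => F (dyadicUp n (σt ω))) P)
    · exact integrable_const C
    · exact fun n => Eventually.of_forall fun ω => by
        simpa [Real.norm_eq_abs] using hFb _
    · exact Eventually.of_forall fun ω => hFlim (σt ω)
  have heq : (fun n => ∫ ω, f (X (dyadicUp n (σt ω)) ω) ∂P)
      = fun n => ∫ ω, F (dyadicUp n (σt ω)) ∂P := funext main
  rw [heq] at lim1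
  exact tendsto_nhds_unique lim1 lim2

end KE

end BochnerAux

/-- Bochner subordination: if `(X_t)` is a subordinator on a
Feller topological monoid with (finite) Laplace exponent `Ψ` and `(σ_t)` is a
classical additive subordinator with Laplace exponent `Φ`, independent of
`(X_t)`, then `Y_t := X_{σ_t}` is again a subordinator on `(M, S)` and its
Laplace exponent is `Φ ∘ Ψ`: `E[χ(Y_t)] = exp(-t Φ(Ψ(χ)))` for all `t ≥ 0`
and `χ ∈ S`. -/
theorem IsSubordinator.bochner {M : Type*} [TopologicalSpace M]
    [CommMonoid M] [ContinuousMul M] [LocallyCompactSpace M] [SecondCountableTopology M]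
    [T2Space M] [MeasurableSpace M] [BorelSpace M]
    {S : Set (M → ℝ)} (hS : FellerClass M S)
    {Ω : Type*} [MeasurableSpace Ω] (P : Measure Ω) [IsProbabilityMeasure P]
    (X : ℝ≥0 → Ω → M) (hX : IsSubordinator P X)
    (Ψ : (M → ℝ) → ℝ) (hΨ0 : ∀ χ ∈ S, 0 ≤ Ψ χ)
    (hΨ : ∀ χ ∈ S, ∀ t : ℝ≥0, ∫ ω, χ (X t ω) ∂P = Real.exp (-(t : ℝ) * Ψ χ))
    (σ : ℝ≥0 → Ω → ℝ≥0) (hσ : IsAddSubordinator P σ)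
    (Φ : ℝ → ℝ)
    (hΦ : ∀ l : ℝ, 0 ≤ l → ∀ t : ℝ≥0,
      ∫ ω, Real.exp (-l * (σ t ω : ℝ)) ∂P = Real.exp (-(t : ℝ) * Φ l))
    (hindep : ProbabilityTheory.IndepFun
      (fun ω => fun t : ℝ≥0 => X t ω) (fun ω => fun t : ℝ≥0 => σ t ω) P) :
    IsSubordinator P (fun t ω => X (σ t ω) ω) ∧
      ∀ χ ∈ S, ∀ t : ℝ≥0,
        ∫ ω, χ (X (σ t ω) ω) ∂P = Real.exp (-(t : ℝ) * Φ (Ψ χ)) := by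
  classical
  have hI : ∀ q r : ℝ≥0, ProbabilityTheory.IndepFun (fun ω => X q ω) (σ r) P := by
    intro q r
    exact hindep.comp (measurable_pi_apply q) (measurable_pi_apply r)
  have hYm : ∀ r : ℝ≥0, Measurable fun ω => X (σ r ω) ω := fun r =>
    measurable_rand_time X hX.measurable hX.rightCont (hσ.measurable r)
  have hKE : ∀ (r : ℝ≥0) {h : M → ℝ} (_ : Continuous h) {C : ℝ} (_ : ∀ x, |h x| ≤ C),
      ∫ ω, h (X (σ r ω) ω) ∂P = ∫ ω', (∫ ω, h (X (σ r ω') ω) ∂P) ∂P :=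
    fun r h hh C hhb => key_exchange X hX.measurable hX.rightCont (hσ.measurable r)
      (fun q => hI q r) hh hhb
  have hmulm : Measurable fun p : M × M => p.1 * p.2 := measurable_fst.mul measurable_snd
  constructor
  · -- Y is a subordinator
    refine ⟨hYm, ?_, ?_, ?_⟩
    · intro ω
      rw [show σ 0 ω = 0 from hσ.init ω]
      exact hX.init ω
    · intro ω t
      have h1 : Tendsto (fun s => σ s ω) (𝓝[≥] t) (𝓝[≥] (σ t ω)) :=
        tendsto_nhdsWithin_iff.mpr ⟨hσ.rightCont ω t,
          eventually_mem_nhdsWithin.mono (fun s hs => hσ.mono ω hs)⟩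
      exact (hX.rightCont ω (σ t ω)).comp h1
    · intro s t
      haveI h1 : IsProbabilityMeasure (P.map (fun ω => X (σ (s+t) ω) ω)) :=
        Measure.isProbabilityMeasure_map (hYm (s+t)).aemeasurable
      haveI h2 : IsProbabilityMeasure (P.map (fun ω => X (σ s ω) ω)) :=
        Measure.isProbabilityMeasure_map (hYm s).aemeasurable
      haveI h3 : IsProbabilityMeasure (P.map (fun ω => X (σ t ω) ω)) :=
        Measure.isProbabilityMeasure_map (hYm t).aemeasurable
      apply ext_of_forall_lintegral_eq_of_IsFiniteMeasure
      intro f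
      set g : M → ℝ := fun x => (f x : ℝ) with hgdef
      have hgc : Continuous g := NNReal.continuous_coe.comp f.continuous
      obtain ⟨C, hgb⟩ : ∃ C : ℝ, ∀ x, |g x| ≤ C := by
        obtain ⟨C0, hC0⟩ := f.bounded
        refine ⟨(f 1 : ℝ) + C0, fun x => ?_⟩
        rw [hgdef, abs_of_nonneg (f x).coe_nonneg]
        have h := hC0 x 1
        rw [NNReal.dist_eq] at h
        linarith [(abs_le.mp h).2]
      have hint1 : Integrable g (P.map (fun ω => X (σ (s+t) ω) ω)) :=
        integrable_of_abs_bound hgc.aestronglyMeasurable hgb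
      haveI h4 : IsProbabilityMeasure (Measure.map (fun p : M × M => p.1 * p.2)
          ((P.map (fun ω => X (σ s ω) ω)).prod (P.map (fun ω => X (σ t ω) ω)))) :=
        Measure.isProbabilityMeasure_map hmulm.aemeasurable
      have hint2 : Integrable g (Measure.map (fun p : M × M => p.1 * p.2)
          ((P.map (fun ω => X (σ s ω) ω)).prod (P.map (fun ω => X (σ t ω) ω)))) :=
        integrable_of_abs_bound hgc.aestronglyMeasurable hgb
      rw [lintegral_coe_eq_integral f hint1, lintegral_coe_eq_integral f hint2]
      congr 1
      -- reduce both sides to Ω-integrals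
      have eL : ∫ x, g x ∂(P.map (fun ω => X (σ (s+t) ω) ω))
          = ∫ ω, g (X (σ (s+t) ω) ω) ∂P :=
        integral_map (hYm (s+t)).aemeasurable hgc.aestronglyMeasurable
      have sm1 : StronglyMeasurable fun a : M => ∫ ω2, g (a * X (σ t ω2) ω2) ∂P :=
        (hgc.measurable.comp (measurable_fst.mul
          ((hYm t).comp measurable_snd))).stronglyMeasurable.integral_prod_right'
      have eR : ∫ x, g x ∂(Measure.map (fun p : M × M => p.1 * p.2)
            ((P.map (fun ω => X (σ s ω) ω)).prod (P.map (fun ω => X (σ t ω) ω))))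
          = ∫ ω1, ∫ ω2, g (X (σ s ω1) ω1 * X (σ t ω2) ω2) ∂P ∂P := by
        rw [integral_map hmulm.aemeasurable hgc.aestronglyMeasurable,
          integral_prod (fun p : M × M => g (p.1 * p.2)) (integrable_of_abs_bound
            ((hgc.comp continuous_mul).aestronglyMeasurable) (fun p => hgb _))]
        calc ∫ a, ∫ b, g (a * b) ∂(P.map (fun ω => X (σ t ω) ω))
              ∂(P.map (fun ω => X (σ s ω) ω))
            = ∫ a, ∫ ω2, g (a * X (σ t ω2) ω2) ∂P ∂(P.map (fun ω => X (σ s ω) ω)) :=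
              integral_congr_ae (Eventually.of_forall fun a =>
                integral_map (hYm t).aemeasurable
                  ((hgc.comp (continuous_const.mul continuous_id)).aestronglyMeasurable))
          _ = ∫ ω1, ∫ ω2, g (X (σ s ω1) ω1 * X (σ t ω2) ω2) ∂P ∂P :=
              integral_map (hYm s).aemeasurable sm1.aestronglyMeasurable
      rw [eL, eR]
      -- the core computation
      set Fg : ℝ≥0 → ℝ := fun u => ∫ ω, g (X u ω) ∂P with hFgdef
      have hFgb : ∀ u, |Fg u| ≤ C := fun u => abs_integral_le_of_bound (fun ω => hgb _)
      have hFg_sm : StronglyMeasurable Fg :=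
        (hgc.measurable.comp (measurable_uncurry_of_rightCont X hX.measurable
          hX.rightCont)).stronglyMeasurable.integral_prod_right'
      -- convolution step for X
      have conv_step : ∀ u v : ℝ≥0,
          Fg (u + v) = ∫ ω'', ∫ ω, g (X u ω * X v ω'') ∂P ∂P := by
        intro u v
        have sm2 : StronglyMeasurable fun a : M => ∫ ω'', g (a * X v ω'') ∂P :=
          (hgc.measurable.comp (measurable_fst.mul
            ((hX.measurable v).comp measurable_snd))).stronglyMeasurable.integral_prod_right'
        have e0 : Fg (u + v) = ∫ x, g x ∂(P.map (X (u+v))) :=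
          (integral_map (hX.measurable (u+v)).aemeasurable hgc.aestronglyMeasurable).symm
        haveI : IsProbabilityMeasure (P.map (X u)) :=
          Measure.isProbabilityMeasure_map (hX.measurable u).aemeasurable
        haveI : IsProbabilityMeasure (P.map (X v)) :=
          Measure.isProbabilityMeasure_map (hX.measurable v).aemeasurable
        rw [e0, hX.increments u v, integral_map hmulm.aemeasurable hgc.aestronglyMeasurable,
          integral_prod (fun p : M × M => g (p.1 * p.2)) (integrable_of_abs_bound
            ((hgc.comp continuous_mul).aestronglyMeasurable) (fun p => hgb _))]
        calc ∫ a, ∫ b, g (a * b) ∂(P.map (X v)) ∂(P.map (X u))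
            = ∫ a, ∫ ω'', g (a * X v ω'') ∂P ∂(P.map (X u)) :=
              integral_congr_ae (Eventually.of_forall fun a =>
                integral_map (hX.measurable v).aemeasurable
                  ((hgc.comp (continuous_const.mul continuous_id)).aestronglyMeasurable))
          _ = ∫ ω, ∫ ω'', g (X u ω * X v ω'') ∂P ∂P :=
              integral_map (hX.measurable u).aemeasurable sm2.aestronglyMeasurable
          _ = ∫ ω'', ∫ ω, g (X u ω * X v ω'') ∂P ∂P :=
              integral_integral_swap (integrable_of_abs_bound
                (hgc.measurable.comp (((hX.measurable u).comp measurable_fst).mul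
                  ((hX.measurable v).comp measurable_snd))).aestronglyMeasurable
                (fun p => hgb _))
      -- continuity of partial integrals
      have cont_int : ∀ {Z : Ω → M}, Measurable Z →
          Continuous fun a : M => ∫ ω, g (a * Z ω) ∂P := by
        intro Z hZ
        rw [continuous_iff_seqContinuous]
        intro as a has
        apply tendsto_integral_of_dominated_convergence (fun _ => C)
        · exact fun n => (hgc.measurable.comp (measurable_const.mul hZ)).aestronglyMeasurable
        · exact integrable_const _
        · exact fun n => Eventually.of_forall fun ω => by
            simpa [Real.norm_eq_abs] using hgb _
        · exact Eventually.of_forall fun ω =>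
            (hgc.tendsto _).comp (has.mul tendsto_const_nhds)
      have cont_int2 : ∀ {Z : Ω → M}, Measurable Z →
          Continuous fun b : M => ∫ ω, g (Z ω * b) ∂P := by
        intro Z hZ
        rw [continuous_iff_seqContinuous]
        intro bs b hbs
        apply tendsto_integral_of_dominated_convergence (fun _ => C)
        · exact fun n => (hgc.measurable.comp (hZ.mul measurable_const)).aestronglyMeasurable
        · exact integrable_const _
        · exact fun n => Eventually.of_forall fun ω => by
            simpa [Real.norm_eq_abs] using hgb _
        · exact Eventually.of_forall fun ω =>
            (hgc.tendsto _).comp (tendsto_const_nhds.mul hbs)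
      set G : M → ℝ := fun a => ∫ ω2, g (a * X (σ t ω2) ω2) ∂P with hGdef
      have hGc : Continuous G := cont_int (hYm t)
      have hGb : ∀ a, |G a| ≤ C := fun a => abs_integral_le_of_bound (fun ω => hgb _)
      -- the exchange at a deterministic first time
      have hstepA : ∀ u : ℝ≥0, ∫ ω2, Fg (u + σ t ω2) ∂P = ∫ ω, G (X u ω) ∂P := by
        intro u
        set Hu : M → ℝ := fun b => ∫ ω, g (X u ω * b) ∂P with hHudef
        have hHuc : Continuous Hu := cont_int2 (hX.measurable u)
        have hHub : ∀ b, |Hu b| ≤ C := fun b => abs_integral_le_of_bound (fun ω => hgb _)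
        have h2 : ∫ ω2, Fg (u + σ t ω2) ∂P
            = ∫ ω2, ∫ ω'', Hu (X (σ t ω2) ω'') ∂P ∂P :=
          integral_congr_ae (Eventually.of_forall fun ω2 => conv_step u (σ t ω2))
        have h3 : ∫ ω2, Hu (X (σ t ω2) ω2) ∂P
            = ∫ ω2, ∫ ω'', Hu (X (σ t ω2) ω'') ∂P ∂P := hKE t hHuc hHub
        rw [h2, ← h3]
        have hsw : ∫ ω, ∫ ω2, g (X u ω * X (σ t ω2) ω2) ∂P ∂P
            = ∫ ω2, ∫ ω, g (X u ω * X (σ t ω2) ω2) ∂P ∂P :=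
          integral_integral_swap (integrable_of_abs_bound
            (hgc.measurable.comp (((hX.measurable u).comp measurable_fst).mul
              ((hYm t).comp measurable_snd))).aestronglyMeasurable
            (fun p => hgb _))
        exact hsw.symm
      -- strong measurability pieces for the σ-increments step
      have sm3 : StronglyMeasurable fun u : ℝ≥0 => ∫ ω2, Fg (u + σ t ω2) ∂P :=
        (hFg_sm.comp_measurable (measurable_fst.add
          ((hσ.measurable t).comp measurable_snd))).integral_prod_right'
      -- assemble
      calc ∫ ω, g (X (σ (s+t) ω) ω) ∂P
          = ∫ ω', ∫ ω, g (X (σ (s+t) ω') ω) ∂P ∂P := hKE (s+t) hgc hgb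
        _ = ∫ ω', Fg (σ (s+t) ω') ∂P := rfl
        _ = ∫ u, Fg u ∂(P.map (σ (s+t))) :=
            (integral_map (hσ.measurable (s+t)).aemeasurable hFg_sm.aestronglyMeasurable).symm
        _ = ∫ p : ℝ≥0 × ℝ≥0, Fg (p.1 + p.2)
              ∂((P.map (σ s)).prod (P.map (σ t))) := by
            rw [hσ.increments s t,
              integral_map (measurable_add : Measurable fun p : ℝ≥0 × ℝ≥0 => p.1 + p.2).aemeasurable
                hFg_sm.aestronglyMeasurable]
        _ = ∫ u, ∫ v, Fg (u + v) ∂(P.map (σ t)) ∂(P.map (σ s)) := by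
            haveI : IsProbabilityMeasure (P.map (σ s)) :=
              Measure.isProbabilityMeasure_map (hσ.measurable s).aemeasurable
            haveI : IsProbabilityMeasure (P.map (σ t)) :=
              Measure.isProbabilityMeasure_map (hσ.measurable t).aemeasurable
            exact integral_prod (fun p : ℝ≥0 × ℝ≥0 => Fg (p.1 + p.2))
              (integrable_of_abs_bound
                ((hFg_sm.comp_measurable
                  (measurable_fst.add measurable_snd)).aestronglyMeasurable)
                (fun p => hFgb _))
        _ = ∫ u, ∫ ω2, Fg (u + σ t ω2) ∂P ∂(P.map (σ s)) :=
            integral_congr_ae (Eventually.of_forall fun u =>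
              integral_map (hσ.measurable t).aemeasurable
                (hFg_sm.comp_measurable
                  (measurable_const.add measurable_id)).aestronglyMeasurable)
        _ = ∫ ω1, ∫ ω2, Fg (σ s ω1 + σ t ω2) ∂P ∂P :=
            integral_map (hσ.measurable s).aemeasurable sm3.aestronglyMeasurable
        _ = ∫ ω1, ∫ ω, G (X (σ s ω1) ω) ∂P ∂P :=
            integral_congr_ae (Eventually.of_forall fun ω1 => hstepA (σ s ω1))
        _ = ∫ ω1, G (X (σ s ω1) ω1) ∂P := (hKE s hGc hGb).symm
        _ = ∫ ω1, ∫ ω2, g (X (σ s ω1) ω1 * X (σ t ω2) ω2) ∂P ∂P := rfl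
  · -- Laplace exponent
    intro χ hχ t
    have hχc : Continuous χ := hS.continuous_char hχ
    have hχb : ∀ x, |χ x| ≤ 1 := fun x => by
      have h := hS.mem_Icc χ hχ x
      rw [abs_le]
      exact ⟨by linarith [h.1], h.2⟩
    rw [hKE t hχc hχb]
    have h2 : ∀ ω', (∫ ω, χ (X (σ t ω') ω) ∂P) = Real.exp (-(Ψ χ) * (σ t ω' : ℝ)) := by
      intro ω'
      rw [hΨ χ hχ (σ t ω')]
      congr 1
      ring
    rw [integral_congr_ae (Eventually.of_forall h2), hΦ (Ψ χ) (hΨ0 χ hχ) t]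
end

section
/- Let (M, M̃) be a Feller topological monoid and let (μ_t)_{t≥0} be a family of Borel probability measures on M. For each t ≥ 0 define the operator P_t on functions by P_t f(x) = ∫_M f(x ⊕ y) μ_t(dy). Then the following are equivalent: (a) (P_t)_{t≥0} restricts to a Feller semigroup on C₀(M), i.e., each P_t maps C₀(M) into C₀(M), P_0 = Id, ‖P_t f‖ ≤ ‖f‖ for all f ∈ C₀(M), P_{s+t} f = P_s P_t f for all s, t ≥ 0 and f ∈ C₀(M), and ‖P_t f − f‖ → 0 as t ↓ 0 for all f ∈ C₀(M); (b) (μ_t)_{t≥0} is an ⊕-convolution semigroup of measures, i.e., μ_0 = δ_e, μ_s ⊕ μ_t = μ_{s+t} for all s, t ≥ 0, and μ_t → δ_e vaguely as t ↓ 0. -/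
open Filter Topology MeasureTheory

open scoped NNReal

open scoped BoundedContinuousFunction
set_option linter.unusedSectionVars false
set_option maxHeartbeats 1000000

namespace FellerAux

variable {M : Type*} [TopologicalSpace M] [CommMonoid M] [ContinuousMul M]
  [LocallyCompactSpace M] [SecondCountableTopology M] [T2Space M]
  [MeasurableSpace M] [BorelSpace M] {S : Set (M → ℝ)}

lemma cocompact_cg : (cocompact M).IsCountablyGenerated := by
  have K := CompactExhaustion.choice M
  have hb : (cocompact M).HasBasis (fun _ : ℕ => True) (fun n => (K n)ᶜ) := by
    refine hasBasis_cocompact.to_hasBasis' (fun t ht => ?_) (fun n _ => ?_)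
    · obtain ⟨n, hn⟩ := K.exists_superset_of_isCompact ht
      exact ⟨n, trivial, Set.compl_subset_compl.mpr hn⟩
    · exact (K.isCompact n).compl_mem_cocompact
  exact hb.isCountablyGenerated

lemma mul_tendsto_cocompact (hS : FellerClass M S) {x : ℕ → M} (y : ℕ → M)
    (hx : Tendsto x atTop (cocompact M)) :
    Tendsto (fun n => x n * y n) atTop (cocompact M) := by
  apply (hS.tendsto_zero_iff _).mp
  intro χ hχ
  have h0 : Tendsto (fun n => χ (x n)) atTop (𝓝 0) := ((hS.tendsto_zero_iff x).mpr hx) χ hχ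
  simp only [hS.map_mul χ hχ]
  refine tendsto_of_tendsto_of_tendsto_of_le_of_le tendsto_const_nhds h0 ?_ ?_
  · intro n
    exact mul_nonneg (hS.mem_Icc χ hχ _).1 (hS.mem_Icc χ hχ _).1
  · intro n
    exact mul_le_of_le_one_right (hS.mem_Icc χ hχ _).1 (hS.mem_Icc χ hχ _).2

lemma exists_bound {f : M → ℝ} (hf : Continuous f) (h0 : Tendsto f (cocompact M) (𝓝 0)) :
    ∃ C : ℝ, 0 ≤ C ∧ ∀ x, |f x| ≤ C := by
  let g : ZeroAtInftyContinuousMap M ℝ := ⟨⟨f, hf⟩, h0⟩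
  exact ⟨‖g.toBCF‖, norm_nonneg _, fun x => by
    have h := g.toBCF.norm_coe_le_norm x; rw [Real.norm_eq_abs] at h; exact h⟩

lemma integrable_of_bound {ν : Measure M} [IsFiniteMeasure ν] {f : M → ℝ}
    (hm : AEStronglyMeasurable f ν) (C : ℝ) (hC : ∀ x, |f x| ≤ C) : Integrable f ν :=
  ⟨hm, HasFiniteIntegral.of_bounded (C := C)
    (Eventually.of_forall fun x => by simpa [Real.norm_eq_abs] using hC x)⟩

lemma no_eps {g : ℕ → ℝ} {ε : ℝ} (hε : 0 < ε) (h : Tendsto g atTop (𝓝 0))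
    (hg : ∀ n, ε ≤ |g n|) : False := by
  have h2 := ge_of_tendsto' h.abs hg
  rw [abs_zero] at h2
  linarith

lemma unif (hS : FellerClass M S) {f : M → ℝ} (hf : Continuous f)
    (h0 : Tendsto f (cocompact M) (𝓝 0)) {ε : ℝ} (hε : 0 < ε) :
    ∃ U ∈ 𝓝 (1 : M), ∀ x : M, ∀ y ∈ U, |f (x * y) - f x| < ε := by
  by_contra h
  push_neg at h
  obtain ⟨u, hu⟩ := (𝓝 (1 : M)).exists_antitone_basis
  choose x y hy hxy using fun n : ℕ => h (u n) (hu.toHasBasis.mem_of_mem trivial)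
  have hytend : Tendsto y atTop (𝓝 1) := hu.tendsto hy
  by_cases hc : Tendsto x atTop (cocompact M)
  · have h1 : Tendsto (fun n => f (x n * y n)) atTop (𝓝 0) :=
      h0.comp (mul_tendsto_cocompact hS y hc)
    have h2 : Tendsto (fun n => f (x n)) atTop (𝓝 0) := h0.comp hc
    exact no_eps hε (by simpa using h1.sub h2) hxy
  · rw [hasBasis_cocompact.tendsto_right_iff] at hc
    push_neg at hc
    obtain ⟨K, hK, hfreq⟩ := hc
    have hfreq' : ∃ᶠ n in atTop, x n ∈ K := by
      refine hfreq.mono fun n hn => ?_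
      simpa using hn
    obtain ⟨φ, hφ, hφK⟩ := Filter.extraction_of_frequently_atTop hfreq'
    obtain ⟨a, _, ψ, hψ, hXa⟩ := hK.tendsto_subseq hφK
    have hY1 : Tendsto (fun n => y (φ (ψ n))) atTop (𝓝 1) :=
      hytend.comp ((hφ.comp hψ).tendsto_atTop)
    have hXY : Tendsto (fun n => x (φ (ψ n)) * y (φ (ψ n))) atTop (𝓝 a) := by
      have := hXa.mul hY1
      simpa using this
    have h1 : Tendsto (fun n => f (x (φ (ψ n)) * y (φ (ψ n)))) atTop (𝓝 (f a)) :=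
      (hf.tendsto a).comp hXY
    have h2 : Tendsto (fun n => f (x (φ (ψ n)))) atTop (𝓝 (f a)) :=
      (hf.tendsto a).comp hXa
    exact no_eps hε (by simpa using h1.sub h2) fun n => hxy (φ (ψ n))

lemma cutoff {K : Set M} {V : Set M} (hK : IsCompact K) (hV : IsOpen V) (hKV : K ⊆ V) :
    ∃ g : C(M, ℝ), Set.EqOn g 1 K ∧ Set.EqOn g 0 Vᶜ ∧ HasCompactSupport g ∧
      ∀ x, g x ∈ Set.Icc (0 : ℝ) 1 :=
  exists_continuous_one_zero_of_isCompact hK hV.isClosed_compl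
    (Set.disjoint_compl_right_iff_subset.mpr hKV)

lemma ext_probability {ν₁ ν₂ : Measure M} [IsProbabilityMeasure ν₁] [IsProbabilityMeasure ν₂]
    (h : ∀ f : M → ℝ, Continuous f → Tendsto f (cocompact M) (𝓝 0) →
      ∫ x, f x ∂ν₁ = ∫ x, f x ∂ν₂) : ν₁ = ν₂ := by
  have hb : ∀ g : M →ᵇ ℝ, ∫ x, g x ∂ν₁ = ∫ x, g x ∂ν₂ := by
    intro g
    have K := CompactExhaustion.choice M
    have hcut : ∀ n : ℕ, ∃ φ : C(M, ℝ), Set.EqOn φ 1 (K n) ∧ HasCompactSupport φ ∧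
        ∀ x, φ x ∈ Set.Icc (0 : ℝ) 1 := by
      intro n
      obtain ⟨φ, h1, _, hcs, hr⟩ := cutoff (K.isCompact n) isOpen_univ (Set.subset_univ _)
      exact ⟨φ, h1, hcs, hr⟩
    choose φ hφ1 hφc hφr using hcut
    have key : ∀ ν : Measure M, IsProbabilityMeasure ν →
        Tendsto (fun n => ∫ x, g x * φ n x ∂ν) atTop (𝓝 (∫ x, g x ∂ν)) := by
      intro ν hν
      apply tendsto_integral_of_dominated_convergence (bound := fun _ => ‖g‖)
      · exact fun n => (g.continuous.mul (φ n).continuous).aestronglyMeasurable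
      · exact integrable_const _
      · intro n
        refine Eventually.of_forall fun x => ?_
        rw [norm_mul]
        calc ‖g x‖ * ‖φ n x‖ ≤ ‖g‖ * 1 := by
              refine mul_le_mul (g.norm_coe_le_norm x) ?_ (norm_nonneg _) (norm_nonneg _)
              rw [Real.norm_eq_abs, abs_le]
              constructor <;> [linarith [(hφr n x).1]; exact (hφr n x).2]
          _ = ‖g‖ := mul_one _
      · refine Eventually.of_forall fun x => ?_
        obtain ⟨N, hN⟩ := K.exists_mem x
        refine tendsto_const_nhds.congr' ?_
        filter_upwards [eventually_ge_atTop N] with n hn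
        have : φ n x = 1 := hφ1 n (K.subset hn hN)
        simp [this]
    have heq : ∀ n, ∫ x, g x * φ n x ∂ν₁ = ∫ x, g x * φ n x ∂ν₂ := by
      intro n
      refine h _ (g.continuous.mul (φ n).continuous) ?_
      have hcs : HasCompactSupport (fun x => g x * φ n x) := (hφc n).mul_left
      exact hcs.is_zero_at_infty
    have t1 := key ν₁ inferInstance
    rw [tendsto_congr heq] at t1
    exact tendsto_nhds_unique t1 (key ν₂ inferInstance)
  apply ext_of_forall_lintegral_eq_of_IsFiniteMeasure
  intro f
  have hrc : Continuous fun x => (f x : ℝ) := NNReal.continuous_coe.comp f.continuous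
  have hbnd : ∃ C, ∀ x y : M, dist ((f x : ℝ)) ((f y : ℝ)) ≤ C := by
    obtain ⟨C, hC⟩ := f.map_bounded'
    exact ⟨C, fun x y => hC x y⟩
  let g : M →ᵇ ℝ := ⟨⟨fun x => (f x : ℝ), hrc⟩, hbnd⟩
  refine (ENNReal.toReal_eq_toReal_iff' (f.lintegral_lt_top_of_nnreal ν₁).ne
    (f.lintegral_lt_top_of_nnreal ν₂).ne).mp ?_
  rw [BoundedContinuousFunction.toReal_lintegral_coe_eq_integral f ν₁,
    BoundedContinuousFunction.toReal_lintegral_coe_eq_integral f ν₂]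
  exact hb g

end FellerAux

/-- for a family `(μ_t)_{t≥0}` of Borel probability measures on a
Feller topological monoid, with associated operators
`P_t f x = ∫ f(x ⊕ y) μ_t(dy)`, the following are equivalent:

(a) `(P_t)` restricts to a Feller semigroup on `C₀(M)`: each `P_t` maps `C₀(M)`
(continuous functions vanishing at infinity) into itself, `P_0 = Id`,
`‖P_t f‖ ≤ ‖f‖`, `P_{s+t} f = P_s (P_t f)`, and `‖P_t f - f‖ → 0` as `t ↓ 0`;

(b) `(μ_t)` is an `⊕`-convolution semigroup: `μ_0 = δ_e`,
`μ_s ⊕ μ_t = μ_{s+t}` (where `μ ⊕ ν` is the pushforward of `μ × ν` under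
`(x,y) ↦ x ⊕ y`), and `μ_t → δ_e` vaguely as `t ↓ 0`. -/
theorem FellerClass.fellerSemigroup_iff_convolutionSemigroup {M : Type*}
    [TopologicalSpace M] [CommMonoid M] [ContinuousMul M] [LocallyCompactSpace M]
    [SecondCountableTopology M] [T2Space M] [MeasurableSpace M] [BorelSpace M]
    {S : Set (M → ℝ)} (hS : FellerClass M S)
    (μ : ℝ≥0 → Measure M) [∀ t, IsProbabilityMeasure (μ t)] :
    -- (a): Feller semigroup on C₀(M)
    ((∀ (t : ℝ≥0) (f : M → ℝ), Continuous f → Tendsto f (cocompact M) (𝓝 0) →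
        Continuous (fun x => ∫ y, f (x * y) ∂(μ t)) ∧
          Tendsto (fun x => ∫ y, f (x * y) ∂(μ t)) (cocompact M) (𝓝 0)) ∧
      (∀ f : M → ℝ, Continuous f → Tendsto f (cocompact M) (𝓝 0) →
        ∀ x, ∫ y, f (x * y) ∂(μ 0) = f x) ∧
      (∀ (t : ℝ≥0) (f : M → ℝ), Continuous f → Tendsto f (cocompact M) (𝓝 0) →
        ∀ C : ℝ, (∀ x, |f x| ≤ C) → ∀ x, |∫ y, f (x * y) ∂(μ t)| ≤ C) ∧
      (∀ (s t : ℝ≥0) (f : M → ℝ), Continuous f → Tendsto f (cocompact M) (𝓝 0) →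
        ∀ x, ∫ y, f (x * y) ∂(μ (s + t)) =
          ∫ z, (∫ y, f (x * z * y) ∂(μ t)) ∂(μ s)) ∧
      (∀ f : M → ℝ, Continuous f → Tendsto f (cocompact M) (𝓝 0) →
        ∀ ε : ℝ, 0 < ε → ∀ᶠ t in 𝓝[>] (0 : ℝ≥0),
          ∀ x, |(∫ y, f (x * y) ∂(μ t)) - f x| < ε))
    ↔
    -- (b): ⊕-convolution semigroup of measures
    (μ 0 = Measure.dirac 1 ∧
      (∀ s t : ℝ≥0,
        Measure.map (fun p : M × M => p.1 * p.2) ((μ s).prod (μ t)) = μ (s + t)) ∧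
      (∀ f : M → ℝ, Continuous f → Tendsto f (cocompact M) (𝓝 0) →
        Tendsto (fun t => ∫ x, f x ∂(μ t)) (𝓝[>] (0 : ℝ≥0)) (𝓝 (f 1)))) := by
  haveI : (cocompact M).IsCountablyGenerated := FellerAux.cocompact_cg
  constructor
  · rintro ⟨hA1, hA2, hA3, hA4, hA5⟩
    refine ⟨?_, ?_, ?_⟩
    · apply FellerAux.ext_probability
      intro f hfc hf0
      have h1 := hA2 f hfc hf0 1
      simp only [one_mul] at h1
      rw [h1, integral_dirac' f 1 hfc.stronglyMeasurable]
    · intro s t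
      haveI : IsProbabilityMeasure
          (Measure.map (fun p : M × M => p.1 * p.2) ((μ s).prod (μ t))) :=
        Measure.isProbabilityMeasure_map continuous_mul.measurable.aemeasurable
      apply FellerAux.ext_probability
      intro f hfc hf0
      obtain ⟨C, hC0, hC⟩ := FellerAux.exists_bound hfc hf0
      have hmap : ∫ x, f x ∂(Measure.map (fun p : M × M => p.1 * p.2) ((μ s).prod (μ t)))
          = ∫ z, ∫ y, f (z * y) ∂(μ t) ∂(μ s) := by
        rw [integral_map continuous_mul.measurable.aemeasurable hfc.aestronglyMeasurable]
        exact integral_prod _ (FellerAux.integrable_of_bound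
          ((hfc.comp continuous_mul).aestronglyMeasurable) C (fun p => hC _))
      have h2 := hA4 s t f hfc hf0 1
      simp only [one_mul] at h2
      rw [hmap, h2]
    · intro f hfc hf0
      rw [Metric.tendsto_nhds]
      intro ε hε
      filter_upwards [hA5 f hfc hf0 ε hε] with t ht
      have h1 := ht 1
      simp only [one_mul] at h1
      rwa [Real.dist_eq]
  · rintro ⟨hB1, hB2, hB3⟩
    refine ⟨?_, ?_, ?_, ?_, ?_⟩
    · -- A1: Feller property
      intro t f hfc hf0
      obtain ⟨C, hC0, hC⟩ := FellerAux.exists_bound hfc hf0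
      constructor
      · rw [continuous_iff_seqContinuous]
        intro xseq a hxa
        show Tendsto (fun n => ∫ y, f (xseq n * y) ∂(μ t)) atTop
          (𝓝 (∫ y, f (a * y) ∂(μ t)))
        apply tendsto_integral_of_dominated_convergence (bound := fun _ => C)
        · exact fun n => (hfc.comp (continuous_mul_left (xseq n))).aestronglyMeasurable
        · exact integrable_const _
        · exact fun n => Eventually.of_forall fun y => by
            simpa [Real.norm_eq_abs] using hC (xseq n * y)
        · refine Eventually.of_forall fun y => ?_
          have hmul : Tendsto (fun n => xseq n * y) atTop (𝓝 (a * y)) :=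
            hxa.mul tendsto_const_nhds
          exact (hfc.tendsto _).comp hmul
      · rw [tendsto_iff_seq_tendsto]
        intro xseq hx
        have h0' : Tendsto (fun n => ∫ y, f (xseq n * y) ∂(μ t)) atTop
            (𝓝 (∫ _, (0 : ℝ) ∂(μ t))) := by
          apply tendsto_integral_of_dominated_convergence (bound := fun _ => C)
          · exact fun n => (hfc.comp (continuous_mul_left (xseq n))).aestronglyMeasurable
          · exact integrable_const _
          · exact fun n => Eventually.of_forall fun y => by
              simpa [Real.norm_eq_abs] using hC (xseq n * y)
          · refine Eventually.of_forall fun y => ?_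
            exact hf0.comp (FellerAux.mul_tendsto_cocompact hS (fun _ => y) hx)
        simp only [integral_zero] at h0'; exact h0'
    · -- A2: P_0 = Id
      intro f hfc hf0 x
      have hm : StronglyMeasurable (fun y => f (x * y)) :=
        (hfc.comp (continuous_mul_left x)).stronglyMeasurable
      rw [hB1, integral_dirac' (fun y => f (x * y)) 1 hm, mul_one]
    · -- A3: contraction
      intro t f hfc hf0 C hC x
      have h := norm_integral_le_of_norm_le_const (μ := μ t) (f := fun y => f (x * y))
        (C := C) (Eventually.of_forall fun y => by
          simpa [Real.norm_eq_abs] using hC (x * y))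
      simpa [Real.norm_eq_abs, measure_univ] using h
    · -- A4: semigroup property
      intro s t f hfc hf0 x
      obtain ⟨C, hC0, hC⟩ := FellerAux.exists_bound hfc hf0
      have hm : AEStronglyMeasurable (fun y => f (x * y))
          (Measure.map (fun p : M × M => p.1 * p.2) ((μ s).prod (μ t))) :=
        (hfc.comp (continuous_mul_left x)).aestronglyMeasurable
      have hint : Integrable (fun p : M × M => f (x * (p.1 * p.2))) ((μ s).prod (μ t)) :=
        FellerAux.integrable_of_bound
          ((hfc.comp (continuous_const.mul continuous_mul)).aestronglyMeasurable) C
          (fun p => hC _)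
      rw [← hB2 s t,
        integral_map continuous_mul.measurable.aemeasurable hm,
        integral_prod _ hint]
      simp only [mul_assoc]
    · -- A5: strong continuity
      intro f hfc hf0 ε hε
      obtain ⟨C, hC0, hC⟩ := FellerAux.exists_bound hfc hf0
      obtain ⟨U, hU, hUf⟩ := FellerAux.unif hS hfc hf0 (half_pos hε)
      obtain ⟨V, hVU, hVopen, hV1⟩ := mem_nhds_iff.mp hU
      obtain ⟨g, hg1, hg0, hgc, hgr⟩ := FellerAux.cutoff isCompact_singleton hVopen
        (Set.singleton_subset_iff.mpr hV1)
      have hg1' : g 1 = 1 := by simpa using hg1 rfl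
      have hgint := hB3 (⇑g) g.continuous hgc.is_zero_at_infty
      set δ := ε / (4 * (C + 1)) with hδdef
      have hδ : 0 < δ := by positivity
      have hev : ∀ᶠ t in 𝓝[>] (0 : ℝ≥0), 1 - δ < ∫ x, g x ∂(μ t) := by
        apply hgint.eventually
        apply eventually_gt_nhds
        rw [hg1']
        linarith
      have hVm : MeasurableSet V := hVopen.measurableSet
      filter_upwards [hev] with t ht x
      have intF1 : Integrable (fun y => f (x * y)) (μ t) :=
        FellerAux.integrable_of_bound (hfc.comp (continuous_mul_left x)).aestronglyMeasurable
          C (fun y => hC _)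
      have intF : Integrable (fun y => f (x * y) - f x) (μ t) :=
        intF1.sub (integrable_const _)
      have inth : Integrable (fun y => ε / 2 + Set.indicator Vᶜ (fun _ => 2 * C) y) (μ t) :=
        (integrable_const _).add ((integrable_const _).indicator hVm.compl)
      have hpt : ∀ y, |f (x * y) - f x| ≤ ε / 2 + Set.indicator Vᶜ (fun _ => 2 * C) y := by
        intro y
        by_cases hy : y ∈ V
        · rw [Set.indicator_of_notMem (by simpa using hy)]
          have := hUf x y (hVU hy)
          linarith
        · rw [Set.indicator_of_mem (Set.mem_compl hy)]
          have h1 := abs_le.mp (hC (x * y))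
          have h2 := abs_le.mp (hC x)
          refine le_trans (show |f (x * y) - f x| ≤ 2 * C from
            abs_le.mpr ⟨by linarith [h1.1, h2.2], by linarith [h1.2, h2.1]⟩) (by linarith)
      have hm1 : ∫ y, g y ∂(μ t) ≤ ((μ t) V).toReal := by
        have hgle : ∀ y, g y ≤ Set.indicator V (fun _ => (1 : ℝ)) y := by
          intro y
          by_cases hy : y ∈ V
          · rw [Set.indicator_of_mem hy]
            exact (hgr y).2
          · rw [Set.indicator_of_notMem hy]
            exact le_of_eq (by simpa using hg0 (Set.mem_compl hy))
        calc ∫ y, g y ∂(μ t)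
            ≤ ∫ y, Set.indicator V (fun _ => (1 : ℝ)) y ∂(μ t) :=
              integral_mono (FellerAux.integrable_of_bound g.continuous.aestronglyMeasurable 1
                (fun y => abs_le.mpr ⟨by linarith [(hgr y).1], (hgr y).2⟩))
                ((integrable_const _).indicator hVm) hgle
          _ = ((μ t) V).toReal := by rw [integral_indicator_const _ hVm]; simp [Measure.real]
      have hsum : ((μ t) V).toReal + ((μ t) Vᶜ).toReal = 1 := by
        have h := measure_add_measure_compl (μ := μ t) hVm
        rw [measure_univ] at h
        rw [← ENNReal.toReal_add (measure_ne_top _ _) (measure_ne_top _ _), h,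
          ENNReal.toReal_one]
      have hmc : ((μ t) Vᶜ).toReal < δ := by linarith
      have hmc0 : (0 : ℝ) ≤ ((μ t) Vᶜ).toReal := ENNReal.toReal_nonneg
      have hint_split : (∫ y, f (x * y) ∂(μ t)) - f x = ∫ y, (f (x * y) - f x) ∂(μ t) := by
        rw [integral_sub intF1 (integrable_const _), integral_const]
        simp [measure_univ]
      rw [hint_split]
      calc |∫ y, (f (x * y) - f x) ∂(μ t)|
          ≤ ∫ y, |f (x * y) - f x| ∂(μ t) := by
            simpa [Real.norm_eq_abs] using
              norm_integral_le_integral_norm (μ := μ t) (fun y => f (x * y) - f x)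
        _ ≤ ∫ y, (ε / 2 + Set.indicator Vᶜ (fun _ => 2 * C) y) ∂(μ t) :=
            integral_mono intF.abs inth hpt
        _ = ε / 2 + (2 * C) * ((μ t) Vᶜ).toReal := by
            rw [integral_add (integrable_const _) ((integrable_const _).indicator hVm.compl),
              integral_const, integral_indicator_const _ hVm.compl]
            simp [measure_univ, Measure.real]
            ring
        _ < ε := by
            have h2 : (2 * C) * ((μ t) Vᶜ).toReal ≤ (2 * C) * δ :=
              mul_le_mul_of_nonneg_left hmc.le (by linarith)
            have h3 : (2 * C) * δ < ε / 2 := by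
              have h4 : (2 * C) * (ε / (4 * (C + 1))) = (2 * C * ε) / (4 * (C + 1)) := by
                ring
              rw [hδdef, h4, div_lt_iff₀ (by positivity : (0 : ℝ) < 4 * (C + 1))]
              nlinarith
            linarith
end
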